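/- arXiv:1306.1162 — 10 statements merged into one kernel-verified Lean document; each statement's English description precedes it below -/
import Mathlib

section
/- Let h, k : ℝ → ℝ be twice continuously differentiable and let f : ℝ² → ℝ be twice continuously differentiable and satisfy the wave equation ∂²f/∂u² = ∂²f/∂v² at every point. Define g : ℝ² → ℝ by g(x,y) = f( (h(x+y) − k(−x+y))/2 , (h(x+y) + k(−x+y))/2 ). Then g satisfies the wave equation ∂²g/∂x² = ∂²g/∂y² at every point. -/
/-!
In characteristic coordinates the map is `(X, Y) ↦ (h X, k Y)`. Its derivative at `p` sends
`(0, 1)` to `w = lorentzConformal h' k' p` and `(1, 0)` to `w.swap`, and the same holds one order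
higher, so by the chain rule `∂ₓ²g` and `∂ᵧ²g` share the first-order term
`Df (lorentzConformal h'' k'' p)`, while their second-order terms are `D²f (w.swap, w.swap)` and
`D²f (w, w)`. For any bilinear `T` these differ by `(w₁² - w₂²) (T(e₁, e₁) - T(e₂, e₂))`, which
vanishes by the wave equation for `f`; no symmetry of `D²f` is needed.
-/

/-- Second partial derivative of `f : ℝ × ℝ → ℝ` in the first variable. -/
noncomputable def pdxx (f : ℝ × ℝ → ℝ) (p : ℝ × ℝ) : ℝ :=
  fderiv ℝ (fun q => fderiv ℝ f q (1, 0)) p (1, 0)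

/-- Second partial derivative of `f : ℝ × ℝ → ℝ` in the second variable. -/
noncomputable def pdyy (f : ℝ × ℝ → ℝ) (p : ℝ × ℝ) : ℝ :=
  fderiv ℝ (fun q => fderiv ℝ f q (0, 1)) p (0, 1)

section SecondDerivative

variable {𝕜 : Type*} [NontriviallyNormedField 𝕜]
  {E : Type*} [NormedAddCommGroup E] [NormedSpace 𝕜 E]
  {F : Type*} [NormedAddCommGroup F] [NormedSpace 𝕜 F]
  {G : Type*} [NormedAddCommGroup G] [NormedSpace 𝕜 G]

theorem fderiv_fderiv_apply_const {f : E → G} {p : E} (hf : DifferentiableAt 𝕜 (fderiv 𝕜 f) p)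
    (v w : E) :
    fderiv 𝕜 (fun q => fderiv 𝕜 f q w) p v = fderiv 𝕜 (fderiv 𝕜 f) p v w := by
  rw [fderiv_clm_apply hf (differentiableAt_const w)]
  simp

theorem fderiv_fderiv_apply_comp {f : F → G} {φ w : E → F} {p : E}
    (hf : DifferentiableAt 𝕜 (fderiv 𝕜 f) (φ p)) (hφ : DifferentiableAt 𝕜 φ p)
    (hw : DifferentiableAt 𝕜 w p) (v : E) :
    fderiv 𝕜 (fun q => fderiv 𝕜 f (φ q) (w q)) p v =
      fderiv 𝕜 (fderiv 𝕜 f) (φ p) (fderiv 𝕜 φ p v) (w p) + fderiv 𝕜 f (φ p) (fderiv 𝕜 w p v) := by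
  have H : HasFDerivAt (fun q => fderiv 𝕜 f (φ q) (w q)) _ p :=
    (hf.hasFDerivAt.comp p hφ.hasFDerivAt).clm_apply hw.hasFDerivAt
  rw [H.fderiv]
  simp [add_comm]

end SecondDerivative

theorem apply_swap_apply_swap_of_diag_eq {𝕜 : Type*} [NontriviallyNormedField 𝕜]
    (T : 𝕜 × 𝕜 →L[𝕜] 𝕜 × 𝕜 →L[𝕜] 𝕜) (hT : T (1, 0) (1, 0) = T (0, 1) (0, 1)) (x : 𝕜 × 𝕜) :
    T x.swap x.swap = T x x := by
  obtain ⟨a, b⟩ := x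
  have hbasis (s t : 𝕜) : ((s, t) : 𝕜 × 𝕜) = s • (1, 0) + t • (0, 1) := by simp
  rw [Prod.swap_prod_mk, hbasis a b, hbasis b a]
  simp only [map_add, map_smul, add_apply, smul_apply, smul_eq_mul]
  linear_combination (b ^ 2 - a ^ 2) * hT

noncomputable def lorentzConformal (h k : ℝ → ℝ) (p : ℝ × ℝ) : ℝ × ℝ :=
  ((h (p.1 + p.2) - k (-p.1 + p.2)) / 2, (h (p.1 + p.2) + k (-p.1 + p.2)) / 2)

section LorentzConformal

variable {c d : ℝ → ℝ} {p : ℝ × ℝ}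

theorem fderiv_lorentzConformal_apply (hc : DifferentiableAt ℝ c (p.1 + p.2))
    (hd : DifferentiableAt ℝ d (-p.1 + p.2)) (v : ℝ × ℝ) :
    fderiv ℝ (lorentzConformal c d) p v =
      lorentzConformal (deriv c (p.1 + p.2) * ·) (deriv d (-p.1 + p.2) * ·) v := by
  have hX : HasFDerivAt (fun q : ℝ × ℝ => q.1 + q.2) _ p :=
    (hasFDerivAt_fst (𝕜 := ℝ) (p := p)).add (hasFDerivAt_snd (𝕜 := ℝ))
  have hY : HasFDerivAt (fun q : ℝ × ℝ => -q.1 + q.2) _ p :=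
    (hasFDerivAt_fst (𝕜 := ℝ) (p := p)).neg.add (hasFDerivAt_snd (𝕜 := ℝ))
  have hcX := hc.hasDerivAt.comp_hasFDerivAt p hX
  have hdY := hd.hasDerivAt.comp_hasFDerivAt p hY
  have hΨ : HasFDerivAt (lorentzConformal c d) _ p :=
    ((hcX.sub hdY).mul_const 2⁻¹).prodMk ((hcX.add hdY).mul_const 2⁻¹)
  rw [hΨ.fderiv]
  simp only [ContinuousLinearMap.prod_apply, smul_apply, sub_apply, add_apply, neg_apply,
    ContinuousLinearMap.coe_fst', ContinuousLinearMap.coe_snd', smul_eq_mul, lorentzConformal,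
    Prod.mk.injEq]
  constructor <;> ring

theorem differentiableAt_lorentzConformal (hc : DifferentiableAt ℝ c (p.1 + p.2))
    (hd : DifferentiableAt ℝ d (-p.1 + p.2)) : DifferentiableAt ℝ (lorentzConformal c d) p := by
  unfold lorentzConformal
  fun_prop

theorem fderiv_lorentzConformal_one_zero (hc : DifferentiableAt ℝ c (p.1 + p.2))
    (hd : DifferentiableAt ℝ d (-p.1 + p.2)) :
    fderiv ℝ (lorentzConformal c d) p (1, 0) = (lorentzConformal (deriv c) (deriv d) p).swap := by
  rw [fderiv_lorentzConformal_apply hc hd]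
  simp [lorentzConformal, sub_eq_add_neg]

theorem fderiv_lorentzConformal_zero_one (hc : DifferentiableAt ℝ c (p.1 + p.2))
    (hd : DifferentiableAt ℝ d (-p.1 + p.2)) :
    fderiv ℝ (lorentzConformal c d) p (0, 1) = lorentzConformal (deriv c) (deriv d) p := by
  rw [fderiv_lorentzConformal_apply hc hd]
  simp [lorentzConformal]

theorem fderiv_swap_lorentzConformal_one_zero (hc : DifferentiableAt ℝ c (p.1 + p.2))
    (hd : DifferentiableAt ℝ d (-p.1 + p.2)) :
    fderiv ℝ (fun q => (lorentzConformal c d q).swap) p (1, 0) =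
      lorentzConformal (deriv c) (deriv d) p := by
  have : (fun q => (lorentzConformal c d q).swap) =
      ContinuousLinearEquiv.prodComm ℝ ℝ ℝ ∘ lorentzConformal c d := rfl
  rw [this, ContinuousLinearEquiv.comp_fderiv]
  simp [fderiv_lorentzConformal_one_zero hc hd]

end LorentzConformal

section WaveOperator

variable {f : ℝ × ℝ → ℝ} {c d : ℝ → ℝ} {p : ℝ × ℝ}

theorem pdxx_comp_lorentzConformal (hf : Differentiable ℝ f)
    (hf' : DifferentiableAt ℝ (fderiv ℝ f) (lorentzConformal c d p))
    (hc : Differentiable ℝ c) (hd : Differentiable ℝ d)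
    (hc' : DifferentiableAt ℝ (deriv c) (p.1 + p.2))
    (hd' : DifferentiableAt ℝ (deriv d) (-p.1 + p.2)) :
    pdxx (f ∘ lorentzConformal c d) p =
      fderiv ℝ (fderiv ℝ f) (lorentzConformal c d p)
          (lorentzConformal (deriv c) (deriv d) p).swap
          (lorentzConformal (deriv c) (deriv d) p).swap +
        fderiv ℝ f (lorentzConformal c d p)
          (lorentzConformal (deriv (deriv c)) (deriv (deriv d)) p) := by
  have hΨ q : DifferentiableAt ℝ (lorentzConformal c d) q :=
    differentiableAt_lorentzConformal (hc _) (hd _)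
  have hw : DifferentiableAt ℝ (fun q => (lorentzConformal (deriv c) (deriv d) q).swap) p :=
    have hw' := differentiableAt_lorentzConformal (p := p) hc' hd'
    hw'.snd.prodMk hw'.fst
  have hgx : (fun q => fderiv ℝ (f ∘ lorentzConformal c d) q (1, 0)) =
      fun q =>
        fderiv ℝ f (lorentzConformal c d q) (lorentzConformal (deriv c) (deriv d) q).swap := by
    funext q
    rw [fderiv_comp q (hf _) (hΨ q), ContinuousLinearMap.comp_apply,
      fderiv_lorentzConformal_one_zero (hc _) (hd _)]
  rw [pdxx, hgx, fderiv_fderiv_apply_comp hf' (hΨ p) hw,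
    fderiv_lorentzConformal_one_zero (hc _) (hd _),
    fderiv_swap_lorentzConformal_one_zero hc' hd']

theorem pdyy_comp_lorentzConformal (hf : Differentiable ℝ f)
    (hf' : DifferentiableAt ℝ (fderiv ℝ f) (lorentzConformal c d p))
    (hc : Differentiable ℝ c) (hd : Differentiable ℝ d)
    (hc' : DifferentiableAt ℝ (deriv c) (p.1 + p.2))
    (hd' : DifferentiableAt ℝ (deriv d) (-p.1 + p.2)) :
    pdyy (f ∘ lorentzConformal c d) p =
      fderiv ℝ (fderiv ℝ f) (lorentzConformal c d p)
          (lorentzConformal (deriv c) (deriv d) p)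
          (lorentzConformal (deriv c) (deriv d) p) +
        fderiv ℝ f (lorentzConformal c d p)
          (lorentzConformal (deriv (deriv c)) (deriv (deriv d)) p) := by
  have hΨ q : DifferentiableAt ℝ (lorentzConformal c d) q :=
    differentiableAt_lorentzConformal (hc _) (hd _)
  have hgy : (fun q => fderiv ℝ (f ∘ lorentzConformal c d) q (0, 1)) =
      fun q => fderiv ℝ f (lorentzConformal c d q) (lorentzConformal (deriv c) (deriv d) q) := by
    funext q
    rw [fderiv_comp q (hf _) (hΨ q), ContinuousLinearMap.comp_apply,
      fderiv_lorentzConformal_zero_one (hc _) (hd _)]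
  rw [pdyy, hgy,
    fderiv_fderiv_apply_comp hf' (hΨ p) (differentiableAt_lorentzConformal hc' hd'),
    fderiv_lorentzConformal_zero_one (hc _) (hd _), fderiv_lorentzConformal_zero_one hc' hd']

end WaveOperator

/-- A Lorentz-conformal transformation `(x,y) ↦ ((h(x+y) − k(−x+y))/2, (h(x+y) + k(−x+y))/2)`
preserves the wave equation. -/
theorem lorentz_conformal_preserves_wave_equation
    (h k : ℝ → ℝ) (hh : ContDiff ℝ 2 h) (hk : ContDiff ℝ 2 k)
    (f : ℝ × ℝ → ℝ) (hf : ContDiff ℝ 2 f)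
    (hwave : ∀ p : ℝ × ℝ, pdxx f p = pdyy f p)
    (g : ℝ × ℝ → ℝ)
    (hg : ∀ p : ℝ × ℝ,
      g p = f ((h (p.1 + p.2) - k (-p.1 + p.2)) / 2,
               (h (p.1 + p.2) + k (-p.1 + p.2)) / 2)) :
    ∀ p : ℝ × ℝ, pdxx g p = pdyy g p := by
  have hgΨ : g = f ∘ lorentzConformal h k := funext hg
  have hf₁ : Differentiable ℝ f := hf.differentiable (by norm_num)
  have hf₂ : Differentiable ℝ (fderiv ℝ f) := by fun_prop
  have hh₁ : Differentiable ℝ h := hh.differentiable (by norm_num)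
  have hk₁ : Differentiable ℝ k := hk.differentiable (by norm_num)
  intro p
  have hwaveΨ : fderiv ℝ (fderiv ℝ f) (lorentzConformal h k p) (1, 0) (1, 0) =
      fderiv ℝ (fderiv ℝ f) (lorentzConformal h k p) (0, 1) (0, 1) := by
    simpa only [pdxx, pdyy, fderiv_fderiv_apply_const (hf₂ _)] using hwave (lorentzConformal h k p)
  rw [hgΨ, pdxx_comp_lorentzConformal hf₁ (hf₂ _) hh₁ hk₁ (hh.differentiable_deriv_two _)
      (hk.differentiable_deriv_two _),
    pdyy_comp_lorentzConformal hf₁ (hf₂ _) hh₁ hk₁ (hh.differentiable_deriv_two _)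
      (hk.differentiable_deriv_two _),
    apply_swap_apply_swap_of_diag_eq _ hwaveΨ]
end

section
/- Let g : ℝ → ℝ be a strictly decreasing bijection. Then the set C = {(x,y) ∈ ℝ² : −x + y = g(x + y)} is the graph of a function f : ℝ → ℝ (i.e. for every x there is a unique y with (x,y) ∈ C), and f strictly contracts secant slopes: for all x₁ ≠ x₂, |f(x₁) − f(x₂)| < |x₁ − x₂|. -/
/-!
In the characteristic coordinates `X = x + y`, `Y = -x + y` the set is the graph `Y = g X`.
A strictly decreasing surjection of `ℝ` is continuous, so `X ↦ X - g X` (which equals `2 x` on the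
contour) is a continuous strictly increasing map tending to `±∞`, hence a bijection; solving it
for `X` gives `f`. Two distinct points of the contour have `ΔX * ΔY < 0`, and since
`2 Δy = ΔX + ΔY` and `2 Δx = ΔX - ΔY`, this is exactly `|Δy| < |Δx|`.
-/

open Filter

theorem Antitone.continuous_of_surjective {α β : Type*} [LinearOrder α] [TopologicalSpace α]
    [OrderTopology α] [LinearOrder β] [TopologicalSpace β] [OrderTopology β] [DenselyOrdered β]
    {f : α → β} (h_anti : Antitone f) (h_surj : Function.Surjective f) : Continuous f :=
  Monotone.continuous_of_surjective (β := βᵒᵈ) h_anti h_surj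

section OrderedField

variable {R : Type*} [Field R] [LinearOrder R] [IsStrictOrderedRing R]

theorem abs_add_lt_abs_sub_of_mul_neg {a b : R} (h : a * b < 0) : |a + b| < |a - b| := by
  rw [← sq_lt_sq]
  nlinarith

theorem StrictAnti.mul_sub_neg {g : R → R} (hg : StrictAnti g) {a b : R} (hab : a ≠ b) :
    (a - b) * (g a - g b) < 0 := by
  rcases hab.lt_or_gt with h | h
  · exact mul_neg_of_neg_of_pos (sub_neg.2 h) (sub_pos.2 (hg h))
  · exact mul_neg_of_pos_of_neg (sub_pos.2 h) (sub_neg.2 (hg h))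

theorem StrictAnti.strictMono_id_sub {g : R → R} (hg : StrictAnti g) :
    StrictMono fun s => s - g s :=
  fun _ _ h => sub_lt_sub h (hg h)

theorem abs_sub_lt_abs_sub_of_rotated_graph {g : R → R} (hg : StrictAnti g) {x₁ y₁ x₂ y₂ : R}
    (h₁ : -x₁ + y₁ = g (x₁ + y₁)) (h₂ : -x₂ + y₂ = g (x₂ + y₂)) (hx : x₁ ≠ x₂) :
    |y₁ - y₂| < |x₁ - x₂| := by
  have hX : x₁ + y₁ ≠ x₂ + y₂ := fun h => hx <| by linarith [congrArg g h]
  have key := abs_add_lt_abs_sub_of_mul_neg (hg.mul_sub_neg hX)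
  rw [← h₁, ← h₂] at key
  have e1 : x₁ + y₁ - (x₂ + y₂) + (-x₁ + y₁ - (-x₂ + y₂)) = 2 * (y₁ - y₂) := by ring
  have e2 : x₁ + y₁ - (x₂ + y₂) - (-x₁ + y₁ - (-x₂ + y₂)) = 2 * (x₁ - x₂) := by ring
  rw [e1, e2, abs_mul, abs_mul, abs_two] at key
  linarith

theorem rotated_graph_iff {g : R → R} (e : R ≃ R) (he : ∀ s, e s = s - g s) (x y : R) :
    -x + y = g (x + y) ↔ y = e.symm (2 * x) - x := by
  rw [eq_sub_iff_add_eq, add_comm y, e.eq_symm_apply, he]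
  constructor <;> intro h <;> linarith

end OrderedField

theorem StrictAnti.surjective_id_sub {g : ℝ → ℝ} (hanti : StrictAnti g)
    (hsurj : Function.Surjective g) : Function.Surjective fun s => s - g s := by
  have hcont : Continuous g := hanti.antitone.continuous_of_surjective hsurj
  refine Continuous.surjective (by fun_prop : Continuous fun s => s - g s) ?_ ?_
  · refine tendsto_atTop_mono' atTop ?_ (tendsto_atTop_add_const_right atTop (-g 0) tendsto_id)
    filter_upwards [eventually_ge_atTop 0] with s hs
    show s + -g 0 ≤ s - g s
    linarith [hanti.antitone hs]
  · refine tendsto_atBot_mono' atBot ?_ (tendsto_atBot_add_const_right atBot (-g 0) tendsto_id)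
    filter_upwards [eventually_le_atBot 0] with s hs
    show s - g s ≤ s + -g 0
    linarith [hanti.antitone hs]

/-- A constant-`v` contour, given in characteristic coordinates by a strictly
decreasing bijection `Y = g(X)`, is in standard coordinates the graph of a function
`y = f(x)` all of whose secant slopes are strictly less than `1` in magnitude. -/
theorem contour_is_graph_with_contracting_secants
    (g : ℝ → ℝ) (hanti : StrictAnti g) (hbij : Function.Bijective g) :
    ∃ f : ℝ → ℝ,
      (∀ x y : ℝ, ((x, y) ∈ {p : ℝ × ℝ | -p.1 + p.2 = g (p.1 + p.2)} ↔ y = f x)) ∧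
      (∀ x₁ x₂ : ℝ, x₁ ≠ x₂ → |f x₁ - f x₂| < |x₁ - x₂|) := by
  let e : ℝ ≃o ℝ := hanti.strictMono_id_sub.orderIsoOfSurjective _ (hanti.surjective_id_sub hbij.2)
  have hgraph := rotated_graph_iff e.toEquiv fun _ => rfl
  refine ⟨fun x => e.symm (2 * x) - x, hgraph, fun x₁ x₂ hx => ?_⟩
  exact abs_sub_lt_abs_sub_of_rotated_graph hanti ((hgraph _ _).2 rfl) ((hgraph _ _).2 rfl) hx
end

section
/- Let a ∈ [−1, 1] and define h : ℝ → ℝ by h(t) = 2(1+a)t + t² for t ≥ 0 and h(t) = 2(1−a)t − t² for t ≤ 0. Then h is a strictly increasing bijection of ℝ, and for all (x,y) ∈ ℝ², the equation h(x + y) + h(−x + y) = 0 holds if and only if y = −a|x| / (1 + |x|). -/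
/-- The ocean ridge: for `a ∈ [−1,1]`, the function `h(t) = 2(1+a)t + t²` for `t ≥ 0`,
`h(t) = 2(1−a)t − t²` for `t ≤ 0` is a strictly increasing bijection of `ℝ`, and the set
`h(x+y) + h(−x+y) = 0` is exactly the ridge curve `y = −a|x|/(1+|x|)`. -/
theorem ocean_ridge
    (a : ℝ) (ha : a ∈ Set.Icc (-1 : ℝ) 1)
    (h : ℝ → ℝ)
    (hpos : ∀ t : ℝ, 0 ≤ t → h t = 2 * (1 + a) * t + t ^ 2)
    (hneg : ∀ t : ℝ, t ≤ 0 → h t = 2 * (1 - a) * t - t ^ 2) :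
    StrictMono h ∧ Function.Bijective h ∧
      (∀ x y : ℝ, h (x + y) + h (-x + y) = 0 ↔ y = -a * |x| / (1 + |x|)) := by
  obtain ⟨ha1, ha2⟩ := ha
  have hmono : StrictMono h := by
    intro s t hst
    rcases le_or_gt 0 s with hs | hs
    · have ht : 0 ≤ t := le_of_lt (lt_of_le_of_lt hs hst)
      rw [hpos s hs, hpos t ht]
      nlinarith [mul_pos (sub_pos.2 hst) (show (0:ℝ) < 2 * (1 + a) + t + s by nlinarith)]
    · rcases le_or_gt 0 t with ht | ht
      · rw [hneg s hs.le, hpos t ht]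
        nlinarith [sq_nonneg s, sq_nonneg t,
          mul_nonneg (show (0:ℝ) ≤ 1 - a by linarith) (neg_nonneg.2 hs.le),
          mul_nonneg (show (0:ℝ) ≤ 1 + a by linarith) ht]
      · rw [hneg s hs.le, hneg t ht.le]
        nlinarith [mul_pos (sub_pos.2 hst) (show (0:ℝ) < 2 * (1 - a) - (t + s) by nlinarith)]
  have hsurj : Function.Surjective h := by
    intro c
    rcases le_or_gt 0 c with hc | hc
    · refine ⟨Real.sqrt ((1 + a) ^ 2 + c) - (1 + a), ?_⟩
      have harg : 0 ≤ (1 + a) ^ 2 + c := by positivity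
      have hsq := Real.sq_sqrt harg
      have hge : 1 + a ≤ Real.sqrt ((1 + a) ^ 2 + c) := by
        have h2 := Real.sqrt_le_sqrt (show (1 + a) ^ 2 ≤ (1 + a) ^ 2 + c by linarith)
        rwa [Real.sqrt_sq (by linarith : (0:ℝ) ≤ 1 + a)] at h2
      rw [hpos _ (by linarith)]
      linear_combination hsq
    · refine ⟨(1 - a) - Real.sqrt ((1 - a) ^ 2 - c), ?_⟩
      have harg : 0 ≤ (1 - a) ^ 2 - c := by nlinarith [sq_nonneg (1 - a)]
      have hsq := Real.sq_sqrt harg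
      have hge : 1 - a ≤ Real.sqrt ((1 - a) ^ 2 - c) := by
        have h2 := Real.sqrt_le_sqrt (show (1 - a) ^ 2 ≤ (1 - a) ^ 2 - c by linarith)
        rwa [Real.sqrt_sq (by linarith : (0:ℝ) ≤ 1 - a)] at h2
      rw [hneg _ (by linarith)]
      linear_combination -hsq
  refine ⟨hmono, ⟨hmono.injective, hsurj⟩, fun x y => ?_⟩
  set u := |x| with hu
  have hu0 : 0 ≤ u := abs_nonneg x
  have h1u : (0:ℝ) < 1 + u := by linarith
  set y₀ := -a * u / (1 + u) with hy₀
  have hy : y₀ * (1 + u) = -(a * u) := by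
    rw [hy₀]; field_simp
  have hkey : h (u + y₀) + h (-u + y₀) = 0 := by
    have hs : 0 ≤ u + y₀ := by
      have heq : u + y₀ = u * (1 + u - a) / (1 + u) := by
        rw [hy₀]; field_simp; ring
      rw [heq]
      exact div_nonneg (mul_nonneg hu0 (by linarith)) h1u.le
    have ht : -u + y₀ ≤ 0 := by
      have heq : -u + y₀ = -(u * (1 + u + a)) / (1 + u) := by
        rw [hy₀]; field_simp; ring
      rw [heq]
      exact div_nonpos_of_nonpos_of_nonneg (neg_nonpos.2 (mul_nonneg hu0 (by linarith))) h1u.le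
    rw [hpos _ hs, hneg _ ht]
    linear_combination 4 * hy
  have hF0 : h (x + y₀) + h (-x + y₀) = 0 := by
    rcases le_or_gt 0 x with hx | hx
    · rw [show x = u from (abs_of_nonneg hx).symm]
      exact hkey
    · rw [show x = -u from by rw [hu, abs_of_neg hx, neg_neg], neg_neg]
      linarith [hkey]
  constructor
  · intro heq
    by_contra hne
    rcases lt_or_gt_of_ne hne with hlt | hgt
    · have hlt2 : h (x + y) + h (-x + y) < h (x + y₀) + h (-x + y₀) :=
        add_lt_add (hmono (by linarith)) (hmono (by linarith))
      rw [heq, hF0] at hlt2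
      exact lt_irrefl 0 hlt2
    · have hlt2 : h (x + y₀) + h (-x + y₀) < h (x + y) + h (-x + y) :=
        add_lt_add (hmono (by linarith)) (hmono (by linarith))
      rw [heq, hF0] at hlt2
      exact lt_irrefl 0 hlt2
  · intro hyy
    rw [hyy]
    exact hF0
end

section
/- Let h, k : ℝ → ℝ be strictly increasing bijections with h(0) = k(0) = 0. Define f = k⁻¹ ∘ h (so the set h(X) = k(Y) is the graph Y = f(X)) and g = k⁻¹ ∘ (−h) (so the set h(X) + k(Y) = 0 is the graph Y = g(X)). Suppose f and g each have finite nonzero one-sided derivatives at 0, denoted f′(0⁻), f′(0⁺), g′(0⁻), g′(0⁺). Then f′(0⁻)·f′(0⁺) = g′(0⁻)·g′(0⁺). -/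
open Set Filter Topology

/-- Helper: a continuous map fixing `0` and mapping `s` into `t` is tendsto
between the corresponding punctured/one-sided neighborhoods of `0`. -/
lemma tendsto_within_zero_aux {φ : ℝ → ℝ} (hc : Continuous φ) (h0 : φ 0 = 0)
    {s t : Set ℝ} (hmaps : ∀ x ∈ s, φ x ∈ t) :
    Filter.Tendsto φ (nhdsWithin 0 s) (nhdsWithin 0 t) := by
  rw [tendsto_nhdsWithin_iff]
  constructor
  · have := (hc.tendsto 0).mono_left (nhdsWithin_le_nhds (s := s))
    rwa [h0] at this
  · exact eventually_nhdsWithin_of_forall hmaps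

/-- Rectangle rule for tangent rays at a crossing of the `u = 0` and `v = 0`
contours: with `f = k⁻¹ ∘ h` (the contour `h(X) = k(Y)`) and `g = k⁻¹ ∘ (−h)`
(the contour `h(X) + k(Y) = 0`), if `f` and `g` have finite nonzero one-sided
derivatives at `0`, then `f′(0⁻)·f′(0⁺) = g′(0⁻)·g′(0⁺)`. -/
theorem rectangle_rule_for_tangent_rays
    (h k : ℝ → ℝ) (hmono : StrictMono h) (hbij : Function.Bijective h)
    (kmono : StrictMono k) (kbij : Function.Bijective k)
    (h0 : h 0 = 0) (k0 : k 0 = 0)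
    (f g : ℝ → ℝ)
    (hf : f = fun X => Function.invFun k (h X))
    (hg : g = fun X => Function.invFun k (-h X))
    (fm fp gm gp : ℝ)
    (hfm : HasDerivWithinAt f fm (Set.Iic 0) 0)
    (hfp : HasDerivWithinAt f fp (Set.Ici 0) 0)
    (hgm : HasDerivWithinAt g gm (Set.Iic 0) 0)
    (hgp : HasDerivWithinAt g gp (Set.Ici 0) 0)
    (hfm0 : fm ≠ 0) (hfp0 : fp ≠ 0) (hgm0 : gm ≠ 0) (hgp0 : gp ≠ 0) :
    fm * fp = gm * gp := by
  -- order isomorphisms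
  set H : ℝ ≃o ℝ := StrictMono.orderIsoOfSurjective h hmono hbij.2 with hHdef
  set K : ℝ ≃o ℝ := StrictMono.orderIsoOfSurjective k kmono kbij.2 with hKdef
  have hH : ⇑H = h := StrictMono.coe_orderIsoOfSurjective h hmono hbij.2
  have hK : ⇑K = k := StrictMono.coe_orderIsoOfSurjective k kmono kbij.2
  have H0 : H 0 = 0 := by rw [show H 0 = h 0 from congrFun hH 0]; exact h0
  have K0 : K 0 = 0 := by rw [show K 0 = k 0 from congrFun hK 0]; exact k0
  -- invFun k = K.symm
  have Hsymm0 : H.symm 0 = 0 := H.symm_apply_eq.mpr H0.symm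
  have Ksymm0 : K.symm 0 = 0 := K.symm_apply_eq.mpr K0.symm
  have hinvk : Function.invFun k = fun y => K.symm y := by
    funext y
    obtain ⟨t, rfl⟩ := kbij.2 y
    rw [Function.leftInverse_invFun kbij.1 t]
    have : K t = k t := congrFun hK t
    rw [← this, K.symm_apply_apply]
  -- rewrite f, g through the order isos
  have hf' : ∀ x, f x = K.symm (H x) := by
    intro x; rw [hf, hinvk]; simp [congrFun hH x]
  have hg' : ∀ x, g x = K.symm (-(H x)) := by
    intro x; rw [hg, hinvk]; simp [congrFun hH x]
  set s : ℝ → ℝ := fun x => H.symm (-(H x)) with hs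
  set finv : ℝ → ℝ := fun y => H.symm (K y) with hfinv
  -- basic algebraic identities
  have f0 : f 0 = 0 := by rw [hf' 0, H0, Ksymm0]
  have g0 : g 0 = 0 := by rw [hg' 0, H0, neg_zero, Ksymm0]
  have s0 : s 0 = 0 := by show H.symm (-(H 0)) = 0; rw [H0, neg_zero, Hsymm0]
  have f_finv : ∀ y, f (finv y) = y := by
    intro y; rw [hf' _, hfinv]; simp
  have sg : ∀ x, finv (g x) = s x := by
    intro x; rw [hg' x, hfinv, hs]; simp
  have ss : ∀ x, s (s x) = x := by
    intro x; rw [hs]; simp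
  -- sign facts
  have Hsign : ∀ x : ℝ, x < 0 → H x < 0 := by
    intro x hx; rw [← H0]; exact H.strictMono hx
  have Hsign' : ∀ x : ℝ, 0 < x → 0 < H x := by
    intro x hx; rw [← H0]; exact H.strictMono hx
  have Ksign : ∀ x : ℝ, x < 0 → K x < 0 := by
    intro x hx; rw [← K0]; exact K.strictMono hx
  have Ksign' : ∀ x : ℝ, 0 < x → 0 < K x := by
    intro x hx; rw [← K0]; exact K.strictMono hx
  have Hsymm_sign : ∀ y : ℝ, y < 0 → H.symm y < 0 := by
    intro y hy
    have : H.symm y < H.symm 0 := H.symm.strictMono hy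
    rwa [← H0, H.symm_apply_apply] at this
  have Hsymm_sign' : ∀ y : ℝ, 0 < y → 0 < H.symm y := by
    intro y hy
    have : H.symm 0 < H.symm y := H.symm.strictMono hy
    rwa [← H0, H.symm_apply_apply] at this
  have Ksymm_sign : ∀ y : ℝ, y < 0 → K.symm y < 0 := by
    intro y hy
    have : K.symm y < K.symm 0 := K.symm.strictMono hy
    rwa [← K0, K.symm_apply_apply] at this
  have Ksymm_sign' : ∀ y : ℝ, 0 < y → 0 < K.symm y := by
    intro y hy
    have : K.symm 0 < K.symm y := K.symm.strictMono hy
    rwa [← K0, K.symm_apply_apply] at this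
  have sneg : ∀ x : ℝ, 0 < x → s x < 0 := by
    intro x hx; exact Hsymm_sign _ (neg_neg_iff_pos.mpr (Hsign' x hx))
  have spos : ∀ x : ℝ, x < 0 → 0 < s x := by
    intro x hx; exact Hsymm_sign' _ (neg_pos.mpr (Hsign x hx))
  have gneg : ∀ x : ℝ, 0 < x → g x < 0 := by
    intro x hx; rw [hg' x]; exact Ksymm_sign _ (neg_neg_iff_pos.mpr (Hsign' x hx))
  have gpos : ∀ x : ℝ, x < 0 → 0 < g x := by
    intro x hx; rw [hg' x]; exact Ksymm_sign' _ (neg_pos.mpr (Hsign x hx))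
  have finvneg : ∀ y : ℝ, y < 0 → finv y < 0 := by
    intro y hy; exact Hsymm_sign _ (Ksign y hy)
  have finvpos : ∀ y : ℝ, 0 < y → 0 < finv y := by
    intro y hy; exact Hsymm_sign' _ (Ksign' y hy)
  -- continuity
  have contH : Continuous (⇑H) := H.toHomeomorph.continuous
  have contHs : Continuous (⇑H.symm) := H.toHomeomorph.symm.continuous
  have contK : Continuous (⇑K) := K.toHomeomorph.continuous
  have contKs : Continuous (⇑K.symm) := K.toHomeomorph.symm.continuous
  have cont_s : Continuous s := contHs.comp contH.neg
  have cont_g : Continuous g := by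
    have : Continuous fun x => K.symm (-(H x)) := contKs.comp contH.neg
    exact (funext hg' : g = _) ▸ this
  have cont_finv : Continuous finv := contHs.comp contK
  -- one-sided slope limits from the derivative hypotheses
  have Fm : Tendsto (fun x => f x / x) (𝓝[<] (0:ℝ)) (𝓝 fm) := by
    have := hasDerivWithinAt_iff_tendsto_slope.1 hfm
    rw [Set.Iic_diff_right] at this
    exact this.congr fun x => by simp [slope_def_field, f0]
  have Fp : Tendsto (fun x => f x / x) (𝓝[>] (0:ℝ)) (𝓝 fp) := by
    have := hasDerivWithinAt_iff_tendsto_slope.1 hfp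
    rw [Set.Ici_sdiff_left] at this
    exact this.congr fun x => by simp [slope_def_field, f0]
  have Gm : Tendsto (fun x => g x / x) (𝓝[<] (0:ℝ)) (𝓝 gm) := by
    have := hasDerivWithinAt_iff_tendsto_slope.1 hgm
    rw [Set.Iic_diff_right] at this
    exact this.congr fun x => by simp [slope_def_field, g0]
  have Gp : Tendsto (fun x => g x / x) (𝓝[>] (0:ℝ)) (𝓝 gp) := by
    have := hasDerivWithinAt_iff_tendsto_slope.1 hgp
    rw [Set.Ici_sdiff_left] at this
    exact this.congr fun x => by simp [slope_def_field, g0]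
  -- tendsto-within facts
  have finv0 : finv 0 = 0 := by show H.symm (K 0) = 0; rw [K0, Hsymm0]
  have finv_tm : Tendsto finv (𝓝[<] (0:ℝ)) (𝓝[<] 0) :=
    tendsto_within_zero_aux cont_finv finv0 fun x hx => finvneg x hx
  have finv_tp : Tendsto finv (𝓝[>] (0:ℝ)) (𝓝[>] 0) :=
    tendsto_within_zero_aux cont_finv finv0 fun x hx => finvpos x hx
  have g_tp : Tendsto g (𝓝[>] (0:ℝ)) (𝓝[<] 0) :=
    tendsto_within_zero_aux cont_g g0 fun x hx => gneg x hx
  have g_tm : Tendsto g (𝓝[<] (0:ℝ)) (𝓝[>] 0) :=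
    tendsto_within_zero_aux cont_g g0 fun x hx => gpos x hx
  have s_tp : Tendsto s (𝓝[>] (0:ℝ)) (𝓝[<] 0) :=
    tendsto_within_zero_aux cont_s s0 fun x hx => sneg x hx
  -- inverse slope limits
  have Finvm : Tendsto (fun y => finv y / y) (𝓝[<] (0:ℝ)) (𝓝 fm⁻¹) := by
    have h1 : Tendsto (fun t : ℝ => t / f t) (𝓝[<] (0:ℝ)) (𝓝 fm⁻¹) :=
      (Fm.inv₀ hfm0).congr fun x => inv_div _ _
    exact (h1.comp finv_tm).congr fun y => by
      simp only [Function.comp_apply, f_finv y]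
  have Finvp : Tendsto (fun y => finv y / y) (𝓝[>] (0:ℝ)) (𝓝 fp⁻¹) := by
    have h1 : Tendsto (fun t : ℝ => t / f t) (𝓝[>] (0:ℝ)) (𝓝 fp⁻¹) :=
      (Fp.inv₀ hfp0).congr fun x => inv_div _ _
    exact (h1.comp finv_tp).congr fun y => by
      simp only [Function.comp_apply, f_finv y]
  -- slope limits of s
  have Sp : Tendsto (fun x => s x / x) (𝓝[>] (0:ℝ)) (𝓝 (fm⁻¹ * gp)) := by
    have h1 := ((Finvm.comp g_tp).mul Gp)
    refine h1.congr' ?_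
    filter_upwards [self_mem_nhdsWithin] with x hx
    have hgx : g x ≠ 0 := ne_of_lt (gneg x hx)
    have hx0 : (x:ℝ) ≠ 0 := ne_of_gt hx
    simp only [Function.comp_apply]
    rw [← sg x]
    field_simp
  have Sm : Tendsto (fun x => s x / x) (𝓝[<] (0:ℝ)) (𝓝 (fp⁻¹ * gm)) := by
    have h1 := ((Finvp.comp g_tm).mul Gm)
    refine h1.congr' ?_
    filter_upwards [self_mem_nhdsWithin] with x hx
    have hgx : g x ≠ 0 := ne_of_gt (gpos x hx)
    have hx0 : (x:ℝ) ≠ 0 := ne_of_lt hx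
    simp only [Function.comp_apply]
    rw [← sg x]
    field_simp
  -- the involution identity forces the product of the slope limits to be 1
  have key : Tendsto (fun x => (s (s x) / s x) * (s x / x)) (𝓝[>] (0:ℝ))
      (𝓝 ((fp⁻¹ * gm) * (fm⁻¹ * gp))) := by
    have := (Sm.comp s_tp).mul Sp
    exact this.congr fun x => by simp only [Function.comp_apply]
  have one : Tendsto (fun x => (s (s x) / s x) * (s x / x)) (𝓝[>] (0:ℝ)) (𝓝 1) := by
    refine tendsto_const_nhds.congr' ?_
    filter_upwards [self_mem_nhdsWithin] with x hx
    have hsx : s x ≠ 0 := ne_of_lt (sneg x hx)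
    have hx0 : (x:ℝ) ≠ 0 := ne_of_gt hx
    rw [ss x]
    field_simp
  have final : (fp⁻¹ * gm) * (fm⁻¹ * gp) = 1 := tendsto_nhds_unique key one
  field_simp at final
  linear_combination -final
end

section
/- Let g₁, g₂, g₃, g₄ be strictly increasing bijections of [0,∞) satisfying the cyclic condition g₄ ∘ g₃ ∘ g₂ ∘ g₁ = id, and let p be any strictly increasing bijection of [0,∞). Define k₋ = p, h₋ = p ∘ g₃, k₊ = p ∘ g₃ ∘ g₂, h₊ = p ∘ g₃ ∘ g₂ ∘ g₁. Then all four relations hold: g₁ = k₊⁻¹ ∘ h₊, g₂ = h₋⁻¹ ∘ k₊, g₃ = k₋⁻¹ ∘ h₋, and g₄ = h₊⁻¹ ∘ k₋. -/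
/-- Solving for the positive and negative parts of a Lorentz-conformal map realizing
four given rays: if `g₁, g₂, g₃, g₄` are strictly increasing bijections of `[0,∞)`
satisfying the cyclic condition `g₄∘g₃∘g₂∘g₁ = id`, and `p` is any strictly increasing
bijection of `[0,∞)`, then `k₋ = p`, `h₋ = p∘g₃`, `k₊ = p∘g₃∘g₂`, `h₊ = p∘g₃∘g₂∘g₁`
satisfy all four relations `g₁ = k₊⁻¹∘h₊`, `g₂ = h₋⁻¹∘k₊`, `g₃ = k₋⁻¹∘h₋`,
`g₄ = h₊⁻¹∘k₋` (each stated on `[0,∞)` in composed form). -/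
theorem realizing_crossing_contours
    (g₁ g₂ g₃ g₄ p : ℝ → ℝ)
    (hg₁ : StrictMonoOn g₁ (Set.Ici 0)) (hg₁b : Set.BijOn g₁ (Set.Ici 0) (Set.Ici 0))
    (hg₂ : StrictMonoOn g₂ (Set.Ici 0)) (hg₂b : Set.BijOn g₂ (Set.Ici 0) (Set.Ici 0))
    (hg₃ : StrictMonoOn g₃ (Set.Ici 0)) (hg₃b : Set.BijOn g₃ (Set.Ici 0) (Set.Ici 0))
    (hg₄ : StrictMonoOn g₄ (Set.Ici 0)) (hg₄b : Set.BijOn g₄ (Set.Ici 0) (Set.Ici 0))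
    (hcyc : ∀ s ∈ Set.Ici (0 : ℝ), g₄ (g₃ (g₂ (g₁ s))) = s)
    (hp : StrictMonoOn p (Set.Ici 0)) (hpb : Set.BijOn p (Set.Ici 0) (Set.Ici 0))
    (km hm kp hp' : ℝ → ℝ)
    (hkm : ∀ s ∈ Set.Ici (0 : ℝ), km s = p s)
    (hhm : ∀ s ∈ Set.Ici (0 : ℝ), hm s = p (g₃ s))
    (hkp : ∀ s ∈ Set.Ici (0 : ℝ), kp s = p (g₃ (g₂ s)))
    (hhp : ∀ s ∈ Set.Ici (0 : ℝ), hp' s = p (g₃ (g₂ (g₁ s)))) :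
    (∀ s ∈ Set.Ici (0 : ℝ), kp (g₁ s) = hp' s) ∧
    (∀ s ∈ Set.Ici (0 : ℝ), hm (g₂ s) = kp s) ∧
    (∀ s ∈ Set.Ici (0 : ℝ), km (g₃ s) = hm s) ∧
    (∀ s ∈ Set.Ici (0 : ℝ), hp' (g₄ s) = km s) := by
  have m1 : Set.MapsTo g₁ (Set.Ici 0) (Set.Ici 0) := hg₁b.mapsTo
  have m2 : Set.MapsTo g₂ (Set.Ici 0) (Set.Ici 0) := hg₂b.mapsTo
  have m3 : Set.MapsTo g₃ (Set.Ici 0) (Set.Ici 0) := hg₃b.mapsTo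
  have m4 : Set.MapsTo g₄ (Set.Ici 0) (Set.Ici 0) := hg₄b.mapsTo
  refine ⟨?_, ?_, ?_, ?_⟩
  · intro s hs
    rw [hkp (g₁ s) (m1 hs), hhp s hs]
  · intro s hs
    rw [hhm (g₂ s) (m2 hs), hkp s hs]
  · intro s hs
    rw [hkm (g₃ s) (m3 hs), hhm s hs]
  · intro s hs
    have hg4s : g₄ s ∈ Set.Ici (0 : ℝ) := m4 hs
    have hu : g₃ (g₂ (g₁ (g₄ s))) ∈ Set.Ici (0 : ℝ) := m3 (m2 (m1 hg4s))
    have heq : g₄ (g₃ (g₂ (g₁ (g₄ s)))) = g₄ s := hcyc (g₄ s) hg4s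
    have : g₃ (g₂ (g₁ (g₄ s))) = s := hg₄b.injOn hu hs heq
    rw [hhp (g₄ s) hg4s, this, hkm s hs]
end

section
/- Let h₁, k₁, h₂, k₂ : ℝ → ℝ be strictly increasing bijections with h₁(0) = k₁(0) = h₂(0) = k₂(0) = 0. Then the two equalities of sets {(X,Y) : h₁(X) = k₁(Y)} = {(X,Y) : h₂(X) = k₂(Y)} and {(X,Y) : h₁(X) + k₁(Y) = 0} = {(X,Y) : h₂(X) + k₂(Y) = 0} hold if and only if there exists a strictly increasing odd bijection ℓ : ℝ → ℝ such that h₂ = ℓ ∘ h₁ and k₂ = ℓ ∘ k₁. -/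
/-- Two invertible Lorentz-conformal maps `(h₁, k₁)` and `(h₂, k₂)` (strictly increasing
bijections of `ℝ` fixing `0`) have the same `u = 0` contour `{h(X) = k(Y)}` and the same
`v = 0` contour `{h(X) + k(Y) = 0}` if and only if they differ by composition with a
strictly increasing odd bijection `ℓ` of `ℝ`: `h₂ = ℓ∘h₁` and `k₂ = ℓ∘k₁`. -/
theorem same_contours_iff_odd_reparametrization
    (h₁ k₁ h₂ k₂ : ℝ → ℝ)
    (h₁mono : StrictMono h₁) (h₁bij : Function.Bijective h₁)
    (k₁mono : StrictMono k₁) (k₁bij : Function.Bijective k₁)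
    (h₂mono : StrictMono h₂) (h₂bij : Function.Bijective h₂)
    (k₂mono : StrictMono k₂) (k₂bij : Function.Bijective k₂)
    (h₁0 : h₁ 0 = 0) (k₁0 : k₁ 0 = 0) (h₂0 : h₂ 0 = 0) (k₂0 : k₂ 0 = 0) :
    ({p : ℝ × ℝ | h₁ p.1 = k₁ p.2} = {p : ℝ × ℝ | h₂ p.1 = k₂ p.2} ∧
     {p : ℝ × ℝ | h₁ p.1 + k₁ p.2 = 0} = {p : ℝ × ℝ | h₂ p.1 + k₂ p.2 = 0}) ↔
    (∃ ℓ : ℝ → ℝ, StrictMono ℓ ∧ Function.Bijective ℓ ∧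
      (∀ s : ℝ, ℓ (-s) = -ℓ s) ∧ h₂ = ℓ ∘ h₁ ∧ k₂ = ℓ ∘ k₁) := by
  constructor
  · rintro ⟨hu, hv⟩
    set e : ℝ ≃o ℝ := StrictMono.orderIsoOfSurjective h₁ h₁mono h₁bij.2 with he
    set f : ℝ ≃o ℝ := StrictMono.orderIsoOfSurjective k₁ k₁mono k₁bij.2 with hf
    have he' : ∀ x, e x = h₁ x := fun x => rfl
    have hf' : ∀ x, f x = k₁ x := fun x => rfl
    refine ⟨h₂ ∘ e.symm, h₂mono.comp e.symm.strictMono, ?_, ?_, ?_, ?_⟩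
    · exact h₂bij.comp e.symm.bijective
    · intro s
      have h1 : h₁ (e.symm s) = s := e.apply_symm_apply s
      have h2 : k₁ (f.symm (-s)) = -s := f.apply_symm_apply (-s)
      have hmem : (e.symm s, f.symm (-s)) ∈ {p : ℝ × ℝ | h₁ p.1 + k₁ p.2 = 0} := by
        simp [h1, h2]
      rw [hv] at hmem
      have hk : k₂ (f.symm (-s)) = h₂ (e.symm (-s)) := by
        have h3 : h₁ (e.symm (-s)) = -s := e.apply_symm_apply (-s)
        have hmem' : (e.symm (-s), f.symm (-s)) ∈ {p : ℝ × ℝ | h₁ p.1 = k₁ p.2} := by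
          simp [h3, h2]
        rw [hu] at hmem'
        exact hmem'.symm
      have : h₂ (e.symm s) + k₂ (f.symm (-s)) = 0 := hmem
      rw [hk] at this
      simp only [Function.comp_apply]
      linarith
    · funext x
      have hx : e.symm (h₁ x) = x := e.symm_apply_apply x
      simp only [Function.comp_apply, hx]
    · funext y
      have h1 : h₁ (e.symm (k₁ y)) = k₁ y := e.apply_symm_apply (k₁ y)
      have hmem : (e.symm (k₁ y), y) ∈ {p : ℝ × ℝ | h₁ p.1 = k₁ p.2} := h1
      rw [hu] at hmem
      exact hmem.symm
  · rintro ⟨ℓ, ℓmono, ℓbij, ℓodd, rfl, rfl⟩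
    constructor
    · ext ⟨X, Y⟩
      simp only [Set.mem_setOf_eq, Function.comp_apply]
      exact ⟨fun h => by rw [h], fun h => ℓbij.1 h⟩
    · ext ⟨X, Y⟩
      simp only [Set.mem_setOf_eq, Function.comp_apply]
      constructor
      · intro h
        have : h₁ X = -(k₁ Y) := by linarith
        rw [this, ℓodd]
        ring
      · intro h
        have : ℓ (h₁ X) = -(ℓ (k₁ Y)) := by linarith
        rw [← ℓodd] at this
        have := ℓbij.1 this
        linarith
end

section
/- Let h, k : [−1,1] → [−1,1] be strictly increasing bijections with h(−1) = k(−1) = −1, h(0) = k(0) = 0, h(1) = k(1) = 1. Define the positive and negative parts h₊(s) = h(s), h₋(s) = −h(−s), k₊(s) = k(s), k₋(s) = −k(−s) for s ∈ [0,1], and for a strictly increasing bijection g of [0,1] let g̃(s) = 1 − g(1−s). Set g₁ = k₊⁻¹ ∘ h̃₊, g₂ = h₋⁻¹ ∘ k̃₊, g₃ = k₋⁻¹ ∘ h̃₋, g₄ = h₊⁻¹ ∘ k̃₋. Then each gⱼ is a strictly increasing bijection of [0,1] and the cyclic condition g₄ ∘ g̃₃ ∘ g₂ ∘ g̃₁ =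 id holds on [0,1]. -/
/-- The involution `g ↦ g̃`, rotating the graph of `g` by 180° about the center of
`[0,1]²`. -/
def tilde (g : ℝ → ℝ) : ℝ → ℝ := fun s => 1 - g (1 - s)

/-- Auxiliary: a strictly increasing bijection of `[-1,1]` fixing `-1,0,1` has an
inverse with good properties. -/
lemma cyclic_aux_pack {f : ℝ → ℝ} (hmono : StrictMonoOn f (Set.Icc (-1:ℝ) 1))
    (hbij : Set.BijOn f (Set.Icc (-1:ℝ) 1) (Set.Icc (-1:ℝ) 1))
    (fm1 : f (-1) = -1) (f0 : f 0 = 0) (f1 : f 1 = 1) :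
    ∃ g : ℝ → ℝ,
      (∀ x ∈ Set.Icc (-1:ℝ) 1, g (f x) = x) ∧
      (∀ y ∈ Set.Icc (-1:ℝ) 1, f (g y) = y) ∧
      StrictMonoOn g (Set.Icc (-1:ℝ) 1) ∧
      (∀ y ∈ Set.Icc (0:ℝ) 1, g y ∈ Set.Icc (0:ℝ) 1) ∧
      (∀ y ∈ Set.Icc (-1:ℝ) 0, g y ∈ Set.Icc (-1:ℝ) 0) := by
  set g := Function.invFunOn f (Set.Icc (-1:ℝ) 1) with hg
  have hinv : Set.InvOn g f (Set.Icc (-1:ℝ) 1) (Set.Icc (-1:ℝ) 1) := hbij.invOn_invFunOn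
  have hmaps : Set.MapsTo g (Set.Icc (-1:ℝ) 1) (Set.Icc (-1:ℝ) 1) :=
    hbij.surjOn.mapsTo_invFunOn
  have hright : ∀ y ∈ Set.Icc (-1:ℝ) 1, f (g y) = y := fun y hy => hinv.2 hy
  have hleft : ∀ x ∈ Set.Icc (-1:ℝ) 1, g (f x) = x := fun x hx => hinv.1 hx
  have gmono : StrictMonoOn g (Set.Icc (-1:ℝ) 1) := by
    intro a ha b hb hab
    by_contra hle
    push_neg at hle
    have h1 : f (g b) ≤ f (g a) := hmono.monotoneOn (hmaps hb) (hmaps ha) hle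
    rw [hright a ha, hright b hb] at h1
    linarith
  have g0 : g 0 = 0 := by
    have := hleft 0 (by constructor <;> norm_num)
    rwa [f0] at this
  have g1 : g 1 = 1 := by
    have := hleft 1 (by constructor <;> norm_num)
    rwa [f1] at this
  have gm1 : g (-1) = -1 := by
    have := hleft (-1) (by constructor <;> norm_num)
    rwa [fm1] at this
  refine ⟨g, hleft, hright, gmono, ?_, ?_⟩
  · intro y hy
    obtain ⟨hy0, hy1⟩ := hy
    have hy' : y ∈ Set.Icc (-1:ℝ) 1 := ⟨by linarith, hy1⟩
    have h1 : g 0 ≤ g y := gmono.monotoneOn (by constructor <;> norm_num) hy' hy0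
    have h2 : g y ≤ g 1 := gmono.monotoneOn hy' (by constructor <;> norm_num) hy1
    rw [g0] at h1; rw [g1] at h2
    exact ⟨h1, h2⟩
  · intro y hy
    obtain ⟨hy0, hy1⟩ := hy
    have hy' : y ∈ Set.Icc (-1:ℝ) 1 := ⟨hy0, by linarith⟩
    have h1 : g (-1) ≤ g y := gmono.monotoneOn (by constructor <;> norm_num) hy' hy0
    have h2 : g y ≤ g 0 := gmono.monotoneOn hy' (by constructor <;> norm_num) hy1
    rw [gm1] at h1; rw [g0] at h2
    exact ⟨h1, h2⟩

lemma cyclic_aux_pos {f : ℝ → ℝ} (hmono : StrictMonoOn f (Set.Icc (-1:ℝ) 1))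
    (f0 : f 0 = 0) (f1 : f 1 = 1) :
    ∀ x ∈ Set.Icc (0:ℝ) 1, f x ∈ Set.Icc (0:ℝ) 1 := by
  intro x hx
  obtain ⟨hx0, hx1⟩ := hx
  have hx' : x ∈ Set.Icc (-1:ℝ) 1 := ⟨by linarith, hx1⟩
  have h1 : f 0 ≤ f x := hmono.monotoneOn (by constructor <;> norm_num) hx' hx0
  have h2 : f x ≤ f 1 := hmono.monotoneOn hx' (by constructor <;> norm_num) hx1
  rw [f0] at h1; rw [f1] at h2
  exact ⟨h1, h2⟩

lemma cyclic_aux_neg {f : ℝ → ℝ} (hmono : StrictMonoOn f (Set.Icc (-1:ℝ) 1))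
    (fm1 : f (-1) = -1) (f0 : f 0 = 0) :
    ∀ x ∈ Set.Icc (-1:ℝ) 0, f x ∈ Set.Icc (-1:ℝ) 0 := by
  intro x hx
  obtain ⟨hx0, hx1⟩ := hx
  have hx' : x ∈ Set.Icc (-1:ℝ) 1 := ⟨hx0, by linarith⟩
  have h1 : f (-1) ≤ f x := hmono.monotoneOn (by constructor <;> norm_num) hx' hx0
  have h2 : f x ≤ f 0 := hmono.monotoneOn hx' (by constructor <;> norm_num) hx1
  rw [fm1] at h1; rw [f0] at h2
  exact ⟨h1, h2⟩

/-- For strictly increasing bijections `h, k` of `[−1,1]` fixing `−1, 0, 1`, the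
functions `g₁ = k₊⁻¹∘h̃₊`, `g₂ = h₋⁻¹∘k̃₊`, `g₃ = k₋⁻¹∘h̃₋`, `g₄ = h₊⁻¹∘k̃₋`
(defined by the relations `k₊(g₁ s) = h̃₊(s)`, `h₋(g₂ s) = k̃₊(s)`, `k₋(g₃ s) = h̃₋(s)`,
`h₊(g₄ s) = k̃₋(s)` for `s ∈ [0,1]`) are strictly increasing bijections of `[0,1]`
satisfying the cyclic condition `g₄ ∘ g̃₃ ∘ g₂ ∘ g̃₁ = id` on `[0,1]`. -/
theorem cyclic_condition_for_square
    (h k : ℝ → ℝ)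
    (hmono : StrictMonoOn h (Set.Icc (-1) 1)) (hbij : Set.BijOn h (Set.Icc (-1) 1) (Set.Icc (-1) 1))
    (kmono : StrictMonoOn k (Set.Icc (-1) 1)) (kbij : Set.BijOn k (Set.Icc (-1) 1) (Set.Icc (-1) 1))
    (hm1 : h (-1) = -1) (h0 : h 0 = 0) (h1 : h 1 = 1)
    (km1 : k (-1) = -1) (k0 : k 0 = 0) (k1 : k 1 = 1) :
    ∃ g₁ g₂ g₃ g₄ : ℝ → ℝ,
      (∀ s ∈ Set.Icc (0 : ℝ) 1, k (g₁ s) = 1 - h (1 - s)) ∧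
      (∀ s ∈ Set.Icc (0 : ℝ) 1, -h (-(g₂ s)) = 1 - k (1 - s)) ∧
      (∀ s ∈ Set.Icc (0 : ℝ) 1, -k (-(g₃ s)) = 1 + h (s - 1)) ∧
      (∀ s ∈ Set.Icc (0 : ℝ) 1, h (g₄ s) = 1 + k (s - 1)) ∧
      (StrictMonoOn g₁ (Set.Icc 0 1) ∧ Set.BijOn g₁ (Set.Icc 0 1) (Set.Icc 0 1)) ∧
      (StrictMonoOn g₂ (Set.Icc 0 1) ∧ Set.BijOn g₂ (Set.Icc 0 1) (Set.Icc 0 1)) ∧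
      (StrictMonoOn g₃ (Set.Icc 0 1) ∧ Set.BijOn g₃ (Set.Icc 0 1) (Set.Icc 0 1)) ∧
      (StrictMonoOn g₄ (Set.Icc 0 1) ∧ Set.BijOn g₄ (Set.Icc 0 1) (Set.Icc 0 1)) ∧
      (∀ s ∈ Set.Icc (0 : ℝ) 1, g₄ (tilde g₃ (g₂ (tilde g₁ s))) = s) := by
  obtain ⟨H, Hleft, Hright, Hmono, Hpos, Hneg⟩ := cyclic_aux_pack hmono hbij hm1 h0 h1
  obtain ⟨K, Kleft, Kright, Kmono, Kpos, Kneg⟩ := cyclic_aux_pack kmono kbij km1 k0 k1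
  have hPos := cyclic_aux_pos hmono h0 h1
  have hNeg := cyclic_aux_neg hmono hm1 h0
  have kPos := cyclic_aux_pos kmono k0 k1
  have kNeg := cyclic_aux_neg kmono km1 k0
  -- small membership helpers
  have memA : ∀ {x : ℝ}, x ∈ Set.Icc (0:ℝ) 1 → x ∈ Set.Icc (-1:ℝ) 1 := by
    intro x hx; exact ⟨by linarith [hx.1], hx.2⟩
  have memB : ∀ {x : ℝ}, x ∈ Set.Icc (-1:ℝ) 0 → x ∈ Set.Icc (-1:ℝ) 1 := by
    intro x hx; exact ⟨hx.1, by linarith [hx.2]⟩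
  refine ⟨fun s => K (1 - h (1 - s)), fun s => -(H (k (1 - s) - 1)),
    fun s => -(K (-(1 + h (s - 1)))), fun s => H (1 + k (s - 1)),
    ?_, ?_, ?_, ?_, ?_, ?_, ?_, ?_, ?_⟩
  · -- equation for g₁
    intro s ⟨hs0, hs1⟩
    have h1s : h (1 - s) ∈ Set.Icc (0:ℝ) 1 := hPos _ ⟨by linarith, by linarith⟩
    exact Kright _ ⟨by linarith [h1s.2], by linarith [h1s.1]⟩
  · -- equation for g₂
    intro s ⟨hs0, hs1⟩
    have k1s : k (1 - s) ∈ Set.Icc (0:ℝ) 1 := kPos _ ⟨by linarith, by linarith⟩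
    rw [neg_neg, Hright _ ⟨by linarith [k1s.1], by linarith [k1s.2]⟩]
    ring
  · -- equation for g₃
    intro s ⟨hs0, hs1⟩
    have hs1' : h (s - 1) ∈ Set.Icc (-1:ℝ) 0 := hNeg _ ⟨by linarith, by linarith⟩
    rw [neg_neg, Kright _ ⟨by linarith [hs1'.2], by linarith [hs1'.1]⟩]
    ring
  · -- equation for g₄
    intro s ⟨hs0, hs1⟩
    have ks1 : k (s - 1) ∈ Set.Icc (-1:ℝ) 0 := kNeg _ ⟨by linarith, by linarith⟩
    exact Hright _ ⟨by linarith [ks1.1], by linarith [ks1.2]⟩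
  · -- g₁ strict mono and bijective
    have mono : StrictMonoOn (fun s => K (1 - h (1 - s))) (Set.Icc (0:ℝ) 1) := by
      intro a ⟨ha0, ha1⟩ b ⟨hb0, hb1⟩ hab
      have hhb : h (1 - b) < h (1 - a) :=
        hmono ⟨by linarith, by linarith⟩ ⟨by linarith, by linarith⟩ (by linarith)
      have hb' : h (1 - b) ∈ Set.Icc (0:ℝ) 1 := hPos _ ⟨by linarith, by linarith⟩
      have ha' : h (1 - a) ∈ Set.Icc (0:ℝ) 1 := hPos _ ⟨by linarith, by linarith⟩
      have m1 : 1 - h (1 - a) ∈ Set.Icc (-1:ℝ) 1 := ⟨by linarith [ha'.2], by linarith [ha'.1]⟩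
      have m2 : 1 - h (1 - b) ∈ Set.Icc (-1:ℝ) 1 := ⟨by linarith [hb'.2], by linarith [hb'.1]⟩
      exact Kmono m1 m2 (by linarith)
    have maps : Set.MapsTo (fun s => K (1 - h (1 - s))) (Set.Icc (0:ℝ) 1) (Set.Icc (0:ℝ) 1) := by
      intro s ⟨hs0, hs1⟩
      have h1s : h (1 - s) ∈ Set.Icc (0:ℝ) 1 := hPos _ ⟨by linarith, by linarith⟩
      exact Kpos _ ⟨by linarith [h1s.2], by linarith [h1s.1]⟩
    refine ⟨mono, maps, mono.injOn, ?_⟩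
    intro y ⟨hy0, hy1⟩
    have ky : k y ∈ Set.Icc (0:ℝ) 1 := kPos _ ⟨hy0, hy1⟩
    have hw : H (1 - k y) ∈ Set.Icc (0:ℝ) 1 := Hpos _ ⟨by linarith [ky.2], by linarith [ky.1]⟩
    refine ⟨1 - H (1 - k y), ⟨by linarith [hw.2], by linarith [hw.1]⟩, ?_⟩
    show K (1 - h (1 - (1 - H (1 - k y)))) = y
    rw [show (1:ℝ) - (1 - H (1 - k y)) = H (1 - k y) from by ring,
      Hright _ ⟨by linarith [ky.2], by linarith [ky.1]⟩,
      show (1:ℝ) - (1 - k y) = k y from by ring]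
    exact Kleft _ ⟨by linarith, by linarith⟩
  · -- g₂
    have mono : StrictMonoOn (fun s => -(H (k (1 - s) - 1))) (Set.Icc (0:ℝ) 1) := by
      intro a ⟨ha0, ha1⟩ b ⟨hb0, hb1⟩ hab
      have hkb : k (1 - b) < k (1 - a) :=
        kmono ⟨by linarith, by linarith⟩ ⟨by linarith, by linarith⟩ (by linarith)
      have hb' : k (1 - b) ∈ Set.Icc (0:ℝ) 1 := kPos _ ⟨by linarith, by linarith⟩
      have ha' : k (1 - a) ∈ Set.Icc (0:ℝ) 1 := kPos _ ⟨by linarith, by linarith⟩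
      have m1 : k (1 - b) - 1 ∈ Set.Icc (-1:ℝ) 1 := ⟨by linarith [hb'.1], by linarith [hb'.2]⟩
      have m2 : k (1 - a) - 1 ∈ Set.Icc (-1:ℝ) 1 := ⟨by linarith [ha'.1], by linarith [ha'.2]⟩
      have hlt : H (k (1 - b) - 1) < H (k (1 - a) - 1) := Hmono m1 m2 (by linarith)
      simpa using neg_lt_neg hlt
    have maps : Set.MapsTo (fun s => -(H (k (1 - s) - 1))) (Set.Icc (0:ℝ) 1) (Set.Icc (0:ℝ) 1) := by
      intro s ⟨hs0, hs1⟩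
      have k1s : k (1 - s) ∈ Set.Icc (0:ℝ) 1 := kPos _ ⟨by linarith, by linarith⟩
      have hm : H (k (1 - s) - 1) ∈ Set.Icc (-1:ℝ) 0 :=
        Hneg (k (1 - s) - 1) ⟨by linarith [k1s.1], by linarith [k1s.2]⟩
      simp only [Set.mem_Icc]
      constructor <;> linarith [hm.1, hm.2]
    refine ⟨mono, maps, mono.injOn, ?_⟩
    intro y ⟨hy0, hy1⟩
    have hy : h (-y) ∈ Set.Icc (-1:ℝ) 0 := hNeg _ ⟨by linarith, by linarith⟩
    have hw : K (1 + h (-y)) ∈ Set.Icc (0:ℝ) 1 := Kpos _ ⟨by linarith [hy.1], by linarith [hy.2]⟩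
    refine ⟨1 - K (1 + h (-y)), ⟨by linarith [hw.2], by linarith [hw.1]⟩, ?_⟩
    show -(H (k (1 - (1 - K (1 + h (-y)))) - 1)) = y
    rw [show (1:ℝ) - (1 - K (1 + h (-y))) = K (1 + h (-y)) from by ring,
      Kright _ ⟨by linarith [hy.1], by linarith [hy.2]⟩,
      show (1:ℝ) + h (-y) - 1 = h (-y) from by ring,
      Hleft _ ⟨by linarith, by linarith⟩]
    ring
  · -- g₃
    have mono : StrictMonoOn (fun s => -(K (-(1 + h (s - 1))))) (Set.Icc (0:ℝ) 1) := by
      intro a ⟨ha0, ha1⟩ b ⟨hb0, hb1⟩ hab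
      have hha : h (a - 1) < h (b - 1) :=
        hmono ⟨by linarith, by linarith⟩ ⟨by linarith, by linarith⟩ (by linarith)
      have ha' : h (a - 1) ∈ Set.Icc (-1:ℝ) 0 := hNeg _ ⟨by linarith, by linarith⟩
      have hb' : h (b - 1) ∈ Set.Icc (-1:ℝ) 0 := hNeg _ ⟨by linarith, by linarith⟩
      have m1 : -(1 + h (b - 1)) ∈ Set.Icc (-1:ℝ) 1 := ⟨by linarith [hb'.2], by linarith [hb'.1]⟩
      have m2 : -(1 + h (a - 1)) ∈ Set.Icc (-1:ℝ) 1 := ⟨by linarith [ha'.2], by linarith [ha'.1]⟩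
      have hlt : K (-(1 + h (b - 1))) < K (-(1 + h (a - 1))) := Kmono m1 m2 (by linarith)
      simpa using neg_lt_neg hlt
    have maps : Set.MapsTo (fun s => -(K (-(1 + h (s - 1))))) (Set.Icc (0:ℝ) 1) (Set.Icc (0:ℝ) 1) := by
      intro s ⟨hs0, hs1⟩
      have hs' : h (s - 1) ∈ Set.Icc (-1:ℝ) 0 := hNeg _ ⟨by linarith, by linarith⟩
      have hm : K (-(1 + h (s - 1))) ∈ Set.Icc (-1:ℝ) 0 :=
        Kneg (-(1 + h (s - 1))) ⟨by linarith [hs'.2], by linarith [hs'.1]⟩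
      simp only [Set.mem_Icc]
      constructor <;> linarith [hm.1, hm.2]
    refine ⟨mono, maps, mono.injOn, ?_⟩
    intro y ⟨hy0, hy1⟩
    have ky : k (-y) ∈ Set.Icc (-1:ℝ) 0 := kNeg _ ⟨by linarith, by linarith⟩
    have hw : H (-1 - k (-y)) ∈ Set.Icc (-1:ℝ) 0 :=
      Hneg _ ⟨by linarith [ky.2], by linarith [ky.1]⟩
    refine ⟨1 + H (-1 - k (-y)), ⟨by linarith [hw.1], by linarith [hw.2]⟩, ?_⟩
    show -(K (-(1 + h (1 + H (-1 - k (-y)) - 1)))) = y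
    rw [show (1:ℝ) + H (-1 - k (-y)) - 1 = H (-1 - k (-y)) from by ring,
      Hright _ ⟨by linarith [ky.2], by linarith [ky.1]⟩,
      show -((1:ℝ) + (-1 - k (-y))) = k (-y) from by ring,
      Kleft _ ⟨by linarith, by linarith⟩]
    ring
  · -- g₄
    have mono : StrictMonoOn (fun s => H (1 + k (s - 1))) (Set.Icc (0:ℝ) 1) := by
      intro a ⟨ha0, ha1⟩ b ⟨hb0, hb1⟩ hab
      have hka : k (a - 1) < k (b - 1) :=
        kmono ⟨by linarith, by linarith⟩ ⟨by linarith, by linarith⟩ (by linarith)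
      have ha' : k (a - 1) ∈ Set.Icc (-1:ℝ) 0 := kNeg _ ⟨by linarith, by linarith⟩
      have hb' : k (b - 1) ∈ Set.Icc (-1:ℝ) 0 := kNeg _ ⟨by linarith, by linarith⟩
      have m1 : 1 + k (a - 1) ∈ Set.Icc (-1:ℝ) 1 := ⟨by linarith [ha'.1], by linarith [ha'.2]⟩
      have m2 : 1 + k (b - 1) ∈ Set.Icc (-1:ℝ) 1 := ⟨by linarith [hb'.1], by linarith [hb'.2]⟩
      exact Hmono m1 m2 (by linarith)
    have maps : Set.MapsTo (fun s => H (1 + k (s - 1))) (Set.Icc (0:ℝ) 1) (Set.Icc (0:ℝ) 1) := by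
      intro s ⟨hs0, hs1⟩
      have ks : k (s - 1) ∈ Set.Icc (-1:ℝ) 0 := kNeg _ ⟨by linarith, by linarith⟩
      exact Hpos _ ⟨by linarith [ks.1], by linarith [ks.2]⟩
    refine ⟨mono, maps, mono.injOn, ?_⟩
    intro y ⟨hy0, hy1⟩
    have hy : h y ∈ Set.Icc (0:ℝ) 1 := hPos _ ⟨hy0, hy1⟩
    have hw : K (h y - 1) ∈ Set.Icc (-1:ℝ) 0 := Kneg _ ⟨by linarith [hy.1], by linarith [hy.2]⟩
    refine ⟨1 + K (h y - 1), ⟨by linarith [hw.1], by linarith [hw.2]⟩, ?_⟩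
    show H (1 + k (1 + K (h y - 1) - 1)) = y
    rw [show (1:ℝ) + K (h y - 1) - 1 = K (h y - 1) from by ring,
      Kright _ ⟨by linarith [hy.1], by linarith [hy.2]⟩,
      show (1:ℝ) + (h y - 1) = h y from by ring]
    exact Hleft _ ⟨by linarith, by linarith⟩
  · -- cyclic condition
    intro s ⟨hs0, hs1⟩
    have hsI : s ∈ Set.Icc (-1:ℝ) 1 := ⟨by linarith, hs1⟩
    have hhs : h s ∈ Set.Icc (0:ℝ) 1 := hPos _ ⟨hs0, hs1⟩
    obtain ⟨hhs0, hhs1⟩ := hhs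
    have e1 : tilde (fun s => K (1 - h (1 - s))) s = 1 - K (1 - h s) := by
      show 1 - K (1 - h (1 - (1 - s))) = _
      rw [show (1:ℝ) - (1 - s) = s from by ring]
    have hKm : K (1 - h s) ∈ Set.Icc (0:ℝ) 1 := Kpos _ ⟨by linarith, by linarith⟩
    have e2 : (fun s => -(H (k (1 - s) - 1))) (tilde (fun s => K (1 - h (1 - s))) s)
        = -(H (-(h s))) := by
      show -(H (k (1 - tilde (fun s => K (1 - h (1 - s))) s) - 1)) = _
      rw [e1, show (1:ℝ) - (1 - K (1 - h s)) = K (1 - h s) from by ring,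
        Kright _ ⟨by linarith, by linarith⟩,
        show (1:ℝ) - h s - 1 = -(h s) from by ring]
    have hHm : H (-(h s)) ∈ Set.Icc (-1:ℝ) 0 := Hneg _ ⟨by linarith, by linarith⟩
    have e3 : tilde (fun s => -(K (-(1 + h (s - 1)))))
        ((fun s => -(H (k (1 - s) - 1))) (tilde (fun s => K (1 - h (1 - s))) s))
        = 1 + K (h s - 1) := by
      show 1 - -(K (-(1 + h (1 - (fun s => -(H (k (1 - s) - 1)))
        (tilde (fun s => K (1 - h (1 - s))) s) - 1)))) = _
      rw [e2, show (1:ℝ) - -(H (-(h s))) - 1 = H (-(h s)) from by ring,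
        Hright _ ⟨by linarith, by linarith⟩,
        show -((1:ℝ) + -(h s)) = h s - 1 from by ring]
      ring
    have hKm2 : K (h s - 1) ∈ Set.Icc (-1:ℝ) 0 := Kneg _ ⟨by linarith, by linarith⟩
    show H (1 + k (tilde (fun s => -(K (-(1 + h (s - 1)))))
      ((fun s => -(H (k (1 - s) - 1))) (tilde (fun s => K (1 - h (1 - s))) s)) - 1)) = s
    rw [e3, show (1:ℝ) + K (h s - 1) - 1 = K (h s - 1) from by ring,
      Kright _ ⟨by linarith, by linarith⟩,
      show (1:ℝ) + (h s - 1) = h s from by ring]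
    exact Hleft _ hsI
end

section
/- Let h₁, k₁, h₂, k₂ : [−1,1] → [−1,1] be strictly increasing bijections each fixing −1, 0, and 1. Then the four equalities of sets {(X,Y) ∈ [0,1]² : h₁(X) + k₁(Y) = 1} = {(X,Y) ∈ [0,1]² : h₂(X) + k₂(Y) = 1}, and the sets {h₁(X) − k₁(Y) = −1}, {h₁(X) + k₁(Y) = −1}, {h₁(X) − k₁(Y) = 1} in [−1,1]² each coinciding with the corresponding set for (h₂,k₂), hold if and only if there exists a strictly increasing odd bijection ℓ of [−1,1] with ℓ(0) = 0 such that h₂ = ℓ ∘ h₁ on [−1,1] and k₂ = ℓ̂ ∘ k₁ on [−1,1], where ℓ̂ is the odd extension to [−1,1] of the function s ↦ 1 − ℓ(1−s) on [0,1]. -/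
private lemma aux_map_one (f : ℝ → ℝ) (mono : StrictMonoOn f (Set.Icc (-1) 1))
    (bij : Set.BijOn f (Set.Icc (-1) 1) (Set.Icc (-1) 1)) : f 1 = 1 := by
  have h1I : (1:ℝ) ∈ Set.Icc (-1:ℝ) 1 := ⟨by norm_num, le_refl 1⟩
  obtain ⟨x, hx, hfx⟩ := bij.surjOn h1I
  have hle : f 1 ≤ 1 := (bij.mapsTo h1I).2
  have h2 : f x ≤ f 1 := mono.monotoneOn hx h1I hx.2
  linarith

/-- Two Lorentz-conformal maps, given by strictly increasing bijections
`h₁, k₁, h₂, k₂` of `[−1,1]` fixing `−1, 0, 1`, map the same curvilinear quadrilateral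
(with sides `{h(X)+k(Y)=1}`, `{h(X)−k(Y)=−1}`, `{h(X)+k(Y)=−1}`, `{h(X)−k(Y)=1}`) to
the standard square if and only if there is a strictly increasing odd bijection `ℓ`
of `[−1,1]` with `ℓ(0)=0` such that `h₂ = ℓ∘h₁` and `k₂ = ℓ̂∘k₁`, where `ℓ̂` is the odd
extension of `s ↦ 1 − ℓ(1−s)`. -/
theorem same_quadrilateral_iff_odd_reparametrization
    (h₁ k₁ h₂ k₂ : ℝ → ℝ)
    (h₁mono : StrictMonoOn h₁ (Set.Icc (-1) 1)) (h₁bij : Set.BijOn h₁ (Set.Icc (-1) 1) (Set.Icc (-1) 1))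
    (k₁mono : StrictMonoOn k₁ (Set.Icc (-1) 1)) (k₁bij : Set.BijOn k₁ (Set.Icc (-1) 1) (Set.Icc (-1) 1))
    (h₂mono : StrictMonoOn h₂ (Set.Icc (-1) 1)) (h₂bij : Set.BijOn h₂ (Set.Icc (-1) 1) (Set.Icc (-1) 1))
    (k₂mono : StrictMonoOn k₂ (Set.Icc (-1) 1)) (k₂bij : Set.BijOn k₂ (Set.Icc (-1) 1) (Set.Icc (-1) 1))
    (h₁m1 : h₁ (-1) = -1) (h₁0 : h₁ 0 = 0) (h₁1 : h₁ 1 = 1)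
    (k₁m1 : k₁ (-1) = -1) (k₁0 : k₁ 0 = 0) (k₁1 : k₁ 1 = 1)
    (h₂m1 : h₂ (-1) = -1) (h₂0 : h₂ 0 = 0) (h₂1 : h₂ 1 = 1)
    (k₂m1 : k₂ (-1) = -1) (k₂0 : k₂ 0 = 0) (k₂1 : k₂ 1 = 1) :
    ({p : ℝ × ℝ | p ∈ Set.Icc (0:ℝ) 1 ×ˢ Set.Icc (0:ℝ) 1 ∧ h₁ p.1 + k₁ p.2 = 1}
       = {p : ℝ × ℝ | p ∈ Set.Icc (0:ℝ) 1 ×ˢ Set.Icc (0:ℝ) 1 ∧ h₂ p.1 + k₂ p.2 = 1} ∧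
     {p : ℝ × ℝ | p ∈ Set.Icc (-1:ℝ) 1 ×ˢ Set.Icc (-1:ℝ) 1 ∧ h₁ p.1 - k₁ p.2 = -1}
       = {p : ℝ × ℝ | p ∈ Set.Icc (-1:ℝ) 1 ×ˢ Set.Icc (-1:ℝ) 1 ∧ h₂ p.1 - k₂ p.2 = -1} ∧
     {p : ℝ × ℝ | p ∈ Set.Icc (-1:ℝ) 1 ×ˢ Set.Icc (-1:ℝ) 1 ∧ h₁ p.1 + k₁ p.2 = -1}
       = {p : ℝ × ℝ | p ∈ Set.Icc (-1:ℝ) 1 ×ˢ Set.Icc (-1:ℝ) 1 ∧ h₂ p.1 + k₂ p.2 = -1} ∧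
     {p : ℝ × ℝ | p ∈ Set.Icc (-1:ℝ) 1 ×ˢ Set.Icc (-1:ℝ) 1 ∧ h₁ p.1 - k₁ p.2 = 1}
       = {p : ℝ × ℝ | p ∈ Set.Icc (-1:ℝ) 1 ×ˢ Set.Icc (-1:ℝ) 1 ∧ h₂ p.1 - k₂ p.2 = 1}) ↔
    (∃ ℓ ℓhat : ℝ → ℝ,
      StrictMonoOn ℓ (Set.Icc (-1) 1) ∧ Set.BijOn ℓ (Set.Icc (-1) 1) (Set.Icc (-1) 1) ∧
      (∀ s ∈ Set.Icc (-1:ℝ) 1, ℓ (-s) = -ℓ s) ∧ ℓ 0 = 0 ∧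
      (∀ s ∈ Set.Icc (0:ℝ) 1, ℓhat s = 1 - ℓ (1 - s)) ∧
      (∀ s ∈ Set.Icc (-1:ℝ) 1, ℓhat (-s) = -ℓhat s) ∧
      (∀ s ∈ Set.Icc (-1:ℝ) 1, h₂ s = ℓ (h₁ s)) ∧
      (∀ s ∈ Set.Icc (-1:ℝ) 1, k₂ s = ℓhat (k₁ s))) := by
  constructor
  · -- forward direction
    rintro ⟨E1, E2, E3, E4⟩
    set I : Set ℝ := Set.Icc (-1) 1 with hI
    have h0I : (0:ℝ) ∈ I := ⟨by norm_num, by norm_num⟩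
    set g : ℝ → ℝ := Function.invFunOn h₁ I with hgdef
    set gk : ℝ → ℝ := Function.invFunOn k₁ I with hgkdef
    have hInv : Set.InvOn g h₁ I I := h₁bij.invOn_invFunOn
    have kInv : Set.InvOn gk k₁ I I := k₁bij.invOn_invFunOn
    have hg : ∀ u ∈ I, h₁ (g u) = u := fun u hu => hInv.2 hu
    have hgk : ∀ u ∈ I, k₁ (gk u) = u := fun u hu => kInv.2 hu
    have gbij : Set.BijOn g I I := Set.BijOn.symm hInv.symm h₁bij
    have gkbij : Set.BijOn gk I I := Set.BijOn.symm kInv.symm k₁bij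
    have hgmem : ∀ u ∈ I, g u ∈ I := gbij.mapsTo
    have hgkmem : ∀ u ∈ I, gk u ∈ I := gkbij.mapsTo
    have gpos : ∀ u, 0 ≤ u → u ≤ 1 → 0 ≤ g u := by
      intro u hu0 hu1
      have huI : u ∈ I := ⟨by linarith, hu1⟩
      exact (h₁mono.le_iff_le h0I (hgmem u huI)).mp (by rw [h₁0, hg u huI]; exact hu0)
    have gkpos : ∀ u, 0 ≤ u → u ≤ 1 → 0 ≤ gk u := by
      intro u hu0 hu1
      have huI : u ∈ I := ⟨by linarith, hu1⟩
      exact (k₁mono.le_iff_le h0I (hgkmem u huI)).mp (by rw [k₁0, hgk u huI]; exact hu0)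
    -- Fact A from E1
    have A : ∀ u, 0 ≤ u → u ≤ 1 → h₂ (g u) + k₂ (gk (1 - u)) = 1 := by
      intro u hu0 hu1
      have huI : u ∈ I := ⟨by linarith, hu1⟩
      have hvI : (1 - u) ∈ I := ⟨by linarith, by linarith⟩
      have hp : ((g u, gk (1 - u)) : ℝ × ℝ) ∈
          {p : ℝ × ℝ | p ∈ Set.Icc (0:ℝ) 1 ×ˢ Set.Icc (0:ℝ) 1 ∧ h₁ p.1 + k₁ p.2 = 1} := by
        refine ⟨⟨⟨gpos u hu0 hu1, (hgmem u huI).2⟩,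
          ⟨gkpos (1 - u) (by linarith) (by linarith), (hgkmem _ hvI).2⟩⟩, ?_⟩
        show h₁ (g u) + k₁ (gk (1 - u)) = 1
        rw [hg u huI, hgk _ hvI]; ring
      rw [E1] at hp
      exact hp.2
    -- Fact B from E4
    have B : ∀ u, 0 ≤ u → u ≤ 1 → h₂ (g u) - k₂ (gk (u - 1)) = 1 := by
      intro u hu0 hu1
      have huI : u ∈ I := ⟨by linarith, hu1⟩
      have hvI : (u - 1) ∈ I := ⟨by linarith, by linarith⟩
      have hp : ((g u, gk (u - 1)) : ℝ × ℝ) ∈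
          {p : ℝ × ℝ | p ∈ Set.Icc (-1:ℝ) 1 ×ˢ Set.Icc (-1:ℝ) 1 ∧ h₁ p.1 - k₁ p.2 = 1} := by
        refine ⟨⟨hgmem u huI, hgkmem _ hvI⟩, ?_⟩
        show h₁ (g u) - k₁ (gk (u - 1)) = 1
        rw [hg u huI, hgk _ hvI]; ring
      rw [E4] at hp
      exact hp.2
    -- Fact C from E3
    have C : ∀ u, -1 ≤ u → u ≤ 0 → h₂ (g u) + k₂ (gk (-1 - u)) = -1 := by
      intro u hu0 hu1
      have huI : u ∈ I := ⟨hu0, by linarith⟩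
      have hvI : (-1 - u) ∈ I := ⟨by linarith, by linarith⟩
      have hp : ((g u, gk (-1 - u)) : ℝ × ℝ) ∈
          {p : ℝ × ℝ | p ∈ Set.Icc (-1:ℝ) 1 ×ˢ Set.Icc (-1:ℝ) 1 ∧ h₁ p.1 + k₁ p.2 = -1} := by
        refine ⟨⟨hgmem u huI, hgkmem _ hvI⟩, ?_⟩
        show h₁ (g u) + k₁ (gk (-1 - u)) = -1
        rw [hg u huI, hgk _ hvI]; ring
      rw [E3] at hp
      exact hp.2
    -- oddness of ℓ on [0,1]
    have loddpos : ∀ s, 0 ≤ s → s ≤ 1 → h₂ (g (-s)) = -h₂ (g s) := by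
      intro s hs0 hs1
      have hB := B s hs0 hs1
      have hC := C (-s) (by linarith) (by linarith)
      have e : (-1 : ℝ) - -s = s - 1 := by ring
      rw [e] at hC
      linarith
    have lodd : ∀ s ∈ I, h₂ (g (-s)) = -h₂ (g s) := by
      intro s hs
      rcases le_total 0 s with h | h
      · exact loddpos s h hs.2
      · have := loddpos (-s) (by linarith) (by linarith [hs.1])
        rw [neg_neg] at this
        linarith
    have l0 : h₂ (g 0) = 0 := by
      have := loddpos 0 le_rfl (by norm_num)
      rw [neg_zero] at this
      linarith
    -- ℓhat formula on [0,1]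
    have lhatf : ∀ s, 0 ≤ s → s ≤ 1 → k₂ (gk s) = 1 - h₂ (g (1 - s)) := by
      intro s hs0 hs1
      have := A (1 - s) (by linarith) (by linarith)
      have e : (1 : ℝ) - (1 - s) = s := by ring
      rw [e] at this
      linarith
    -- oddness of ℓhat
    have lhatoddpos : ∀ s, 0 ≤ s → s ≤ 1 → k₂ (gk (-s)) = -k₂ (gk s) := by
      intro s hs0 hs1
      have hB := B (1 - s) (by linarith) (by linarith)
      have e : (1 : ℝ) - s - 1 = -s := by ring
      rw [e] at hB
      have := lhatf s hs0 hs1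
      linarith
    have lhatodd : ∀ s ∈ I, k₂ (gk (-s)) = -k₂ (gk s) := by
      intro s hs
      rcases le_total 0 s with h | h
      · exact lhatoddpos s h hs.2
      · have := lhatoddpos (-s) (by linarith) (by linarith [hs.1])
        rw [neg_neg] at this
        linarith
    refine ⟨fun u => h₂ (g u), fun u => k₂ (gk u), ?_, ?_, ?_, ?_, ?_, ?_, ?_, ?_⟩
    · intro a ha b hb hab
      have hga : g a ∈ I := hgmem a ha
      have hgb : g b ∈ I := hgmem b hb
      have : g a < g b := by
        refine (h₁mono.lt_iff_lt hga hgb).mp ?_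
        rw [hg a ha, hg b hb]; exact hab
      exact h₂mono hga hgb this
    · exact h₂bij.comp gbij
    · exact lodd
    · exact l0
    · intro s hs; exact lhatf s hs.1 hs.2
    · exact lhatodd
    · intro s hs
      show h₂ s = h₂ (g (h₁ s))
      rw [hInv.1 hs]
    · intro s hs
      show k₂ s = k₂ (gk (k₁ s))
      rw [kInv.1 hs]
  · -- reverse direction
    rintro ⟨ℓ, ℓhat, lmono, lbij, lodd, l0, lhatf, lhatodd, hh, kk⟩
    set I : Set ℝ := Set.Icc (-1) 1 with hI
    have h0I : (0:ℝ) ∈ I := ⟨by norm_num, by norm_num⟩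
    have h1I : (1:ℝ) ∈ I := ⟨by norm_num, le_refl 1⟩
    have l1 : ℓ 1 = 1 := aux_map_one ℓ lmono lbij
    have linj : Set.InjOn ℓ I := lmono.injOn
    have lmem : ∀ a ∈ I, ℓ a ∈ I := lbij.mapsTo
    have lhatneg : ∀ t, -1 ≤ t → t ≤ 0 → ℓhat t = ℓ (1 + t) - 1 := by
      intro t ht0 ht1
      have h1 : ℓhat t = -ℓhat (-t) := by
        have := lhatodd (-t) ⟨by linarith, by linarith⟩
        rw [neg_neg] at this
        linarith
      rw [h1, lhatf (-t) ⟨by linarith, by linarith⟩]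
      have e : (1 : ℝ) - -t = 1 + t := by ring
      rw [e]; ring
    have llt1 : ∀ a, -1 ≤ a → a < 1 → ℓ a < 1 := by
      intro a ha0 ha1
      have := lmono ⟨ha0, le_of_lt ha1⟩ h1I ha1
      rw [l1] at this; exact this
    refine ⟨?_, ?_, ?_, ?_⟩
    · -- E1 : sum = 1 on [0,1]²
      ext ⟨X, Y⟩
      simp only [Set.mem_setOf_eq, Set.mem_prod, Set.mem_Icc]
      constructor
      · rintro ⟨⟨⟨hX0, hX1⟩, hY0, hY1⟩, heq⟩
        refine ⟨⟨⟨hX0, hX1⟩, hY0, hY1⟩, ?_⟩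
        have hXI : X ∈ I := ⟨by linarith, hX1⟩
        have hYI : Y ∈ I := ⟨by linarith, hY1⟩
        have hmh : h₁ X ∈ I := h₁bij.mapsTo hXI
        have hmk : k₁ Y ∈ I := k₁bij.mapsTo hYI
        have hk0 : 0 ≤ k₁ Y := by
          have := k₁mono.monotoneOn h0I hYI hY0
          rw [k₁0] at this; exact this
        rw [hh X hXI, kk Y hYI, lhatf (k₁ Y) ⟨hk0, hmk.2⟩]
        have e : (1 : ℝ) - k₁ Y = h₁ X := by linarith
        rw [e]; ring
      · rintro ⟨⟨⟨hX0, hX1⟩, hY0, hY1⟩, heq⟩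
        refine ⟨⟨⟨hX0, hX1⟩, hY0, hY1⟩, ?_⟩
        have hXI : X ∈ I := ⟨by linarith, hX1⟩
        have hYI : Y ∈ I := ⟨by linarith, hY1⟩
        have hmh : h₁ X ∈ I := h₁bij.mapsTo hXI
        have hmk : k₁ Y ∈ I := k₁bij.mapsTo hYI
        have hk0 : 0 ≤ k₁ Y := by
          have := k₁mono.monotoneOn h0I hYI hY0
          rw [k₁0] at this; exact this
        rw [hh X hXI, kk Y hYI, lhatf (k₁ Y) ⟨hk0, hmk.2⟩] at heq
        have := linj hmh (⟨by linarith [hmk.2], by linarith⟩ : (1 - k₁ Y) ∈ I) (by linarith)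
        linarith
    · -- E2 : diff = -1 on [-1,1]²
      ext ⟨X, Y⟩
      simp only [Set.mem_setOf_eq, Set.mem_prod, Set.mem_Icc]
      constructor
      · rintro ⟨⟨⟨hX0, hX1⟩, hY0, hY1⟩, heq⟩
        refine ⟨⟨⟨hX0, hX1⟩, hY0, hY1⟩, ?_⟩
        have hXI : X ∈ I := ⟨hX0, hX1⟩
        have hYI : Y ∈ I := ⟨hY0, hY1⟩
        have hmh : h₁ X ∈ I := h₁bij.mapsTo hXI
        have hmk : k₁ Y ∈ I := k₁bij.mapsTo hYI
        have hk0 : 0 ≤ k₁ Y := by linarith [hmh.1]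
        rw [hh X hXI, kk Y hYI, lhatf (k₁ Y) ⟨hk0, hmk.2⟩]
        have e : h₁ X = -(1 - k₁ Y) := by linarith
        rw [e, lodd (1 - k₁ Y) ⟨by linarith [hmk.2], by linarith⟩]
        ring
      · rintro ⟨⟨⟨hX0, hX1⟩, hY0, hY1⟩, heq⟩
        refine ⟨⟨⟨hX0, hX1⟩, hY0, hY1⟩, ?_⟩
        have hXI : X ∈ I := ⟨hX0, hX1⟩
        have hYI : Y ∈ I := ⟨hY0, hY1⟩
        have hmh : h₁ X ∈ I := h₁bij.mapsTo hXI
        have hmk : k₁ Y ∈ I := k₁bij.mapsTo hYI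
        rw [hh X hXI, kk Y hYI] at heq
        rcases le_or_gt 0 (k₁ Y) with ht | ht
        · rw [lhatf (k₁ Y) ⟨ht, hmk.2⟩] at heq
          have e : ℓ (-(1 - k₁ Y)) = -ℓ (1 - k₁ Y) :=
            lodd (1 - k₁ Y) ⟨by linarith [hmk.2], by linarith⟩
          have := linj hmh (⟨by linarith [hmk.2], by linarith [hmk.2]⟩ : (-(1 - k₁ Y)) ∈ I)
            (by linarith)
          linarith
        · rw [lhatneg (k₁ Y) hmk.1 (le_of_lt ht)] at heq
          have h1 : ℓ (1 + k₁ Y) < 1 := llt1 (1 + k₁ Y) (by linarith [hmk.1]) (by linarith)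
          have h2 : -1 ≤ ℓ (h₁ X) := (lmem _ hmh).1
          linarith
    · -- E3 : sum = -1 on [-1,1]²
      ext ⟨X, Y⟩
      simp only [Set.mem_setOf_eq, Set.mem_prod, Set.mem_Icc]
      constructor
      · rintro ⟨⟨⟨hX0, hX1⟩, hY0, hY1⟩, heq⟩
        refine ⟨⟨⟨hX0, hX1⟩, hY0, hY1⟩, ?_⟩
        have hXI : X ∈ I := ⟨hX0, hX1⟩
        have hYI : Y ∈ I := ⟨hY0, hY1⟩
        have hmh : h₁ X ∈ I := h₁bij.mapsTo hXI
        have hmk : k₁ Y ∈ I := k₁bij.mapsTo hYI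
        have hk0 : k₁ Y ≤ 0 := by linarith [hmh.1]
        rw [hh X hXI, kk Y hYI, lhatneg (k₁ Y) hmk.1 hk0]
        have e : h₁ X = -(1 + k₁ Y) := by linarith
        rw [e, lodd (1 + k₁ Y) ⟨by linarith [hmk.1], by linarith⟩]
        ring
      · rintro ⟨⟨⟨hX0, hX1⟩, hY0, hY1⟩, heq⟩
        refine ⟨⟨⟨hX0, hX1⟩, hY0, hY1⟩, ?_⟩
        have hXI : X ∈ I := ⟨hX0, hX1⟩
        have hYI : Y ∈ I := ⟨hY0, hY1⟩
        have hmh : h₁ X ∈ I := h₁bij.mapsTo hXI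
        have hmk : k₁ Y ∈ I := k₁bij.mapsTo hYI
        rw [hh X hXI, kk Y hYI] at heq
        rcases le_or_gt (k₁ Y) 0 with ht | ht
        · rw [lhatneg (k₁ Y) hmk.1 ht] at heq
          have e : ℓ (-(1 + k₁ Y)) = -ℓ (1 + k₁ Y) :=
            lodd (1 + k₁ Y) ⟨by linarith [hmk.1], by linarith⟩
          have := linj hmh (⟨by linarith, by linarith [hmk.1]⟩ : (-(1 + k₁ Y)) ∈ I)
            (by linarith)
          linarith
        · rw [lhatf (k₁ Y) ⟨le_of_lt ht, hmk.2⟩] at heq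
          have h1 : ℓ (1 - k₁ Y) < 1 := llt1 (1 - k₁ Y) (by linarith [hmk.2]) (by linarith)
          have h2 : -1 ≤ ℓ (h₁ X) := (lmem _ hmh).1
          linarith
    · -- E4 : diff = 1 on [-1,1]²
      ext ⟨X, Y⟩
      simp only [Set.mem_setOf_eq, Set.mem_prod, Set.mem_Icc]
      constructor
      · rintro ⟨⟨⟨hX0, hX1⟩, hY0, hY1⟩, heq⟩
        refine ⟨⟨⟨hX0, hX1⟩, hY0, hY1⟩, ?_⟩
        have hXI : X ∈ I := ⟨hX0, hX1⟩
        have hYI : Y ∈ I := ⟨hY0, hY1⟩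
        have hmh : h₁ X ∈ I := h₁bij.mapsTo hXI
        have hmk : k₁ Y ∈ I := k₁bij.mapsTo hYI
        have hk0 : k₁ Y ≤ 0 := by linarith [hmh.2]
        rw [hh X hXI, kk Y hYI, lhatneg (k₁ Y) hmk.1 hk0]
        have e : h₁ X = 1 + k₁ Y := by linarith
        rw [e]; ring
      · rintro ⟨⟨⟨hX0, hX1⟩, hY0, hY1⟩, heq⟩
        refine ⟨⟨⟨hX0, hX1⟩, hY0, hY1⟩, ?_⟩
        have hXI : X ∈ I := ⟨hX0, hX1⟩
        have hYI : Y ∈ I := ⟨hY0, hY1⟩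
        have hmh : h₁ X ∈ I := h₁bij.mapsTo hXI
        have hmk : k₁ Y ∈ I := k₁bij.mapsTo hYI
        rw [hh X hXI, kk Y hYI] at heq
        rcases le_or_gt (k₁ Y) 0 with ht | ht
        · rw [lhatneg (k₁ Y) hmk.1 ht] at heq
          have := linj hmh (⟨by linarith [hmk.1], by linarith⟩ : (1 + k₁ Y) ∈ I)
            (by linarith)
          linarith
        · rw [lhatf (k₁ Y) ⟨le_of_lt ht, hmk.2⟩] at heq
          have h1 : ℓ (1 - k₁ Y) < 1 := llt1 (1 - k₁ Y) (by linarith [hmk.2]) (by linarith)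
          have h2 : ℓ (h₁ X) ≤ 1 := (lmem _ hmh).2
          linarith
end

section
/- Let h : ℝ → ℝ be an odd strictly increasing bijection that is differentiable at every t ≠ 0 with h′(t) > 0 for t ≠ 0. For c > 0 define H_c : ℝ → ℝ by H_c(t) = h(t + c) − h(c) for t ≥ 0 and H_c(t) = h(t − c) − h(−c) for t ≤ 0. Then H_c is a strictly increasing bijection of ℝ, H_c(0) = 0, and H_c is differentiable at every t ∈ ℝ with H_c′(t) > 0; in particular at t = 0 both one-sided derivatives equal h′(c) = h′(−c). -/
/-!
Away from `t = 0` the function `H_c` is a translate of `h` shifted off the singular point, so it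
inherits differentiability and a positive derivative there. At `t = 0` the two branches are
translates of `h` near `c` and near `-c`; since `h` is odd its derivative is even, so both
one-sided derivatives equal `h′(c)` and glue to a two-sided one.
-/

open Set

theorem HasDerivAt.of_neg_of_odd {𝕜 F : Type*} [NontriviallyNormedField 𝕜] [NormedAddCommGroup F]
    [NormedSpace 𝕜 F] {f : 𝕜 → F} {f' : F} {x : 𝕜} (hf : Function.Odd f)
    (hd : HasDerivAt f f' (-x)) : HasDerivAt f f' x := by
  have hf_eq : -(f ∘ Neg.neg) = f := funext fun t => by simp [hf t]
  simpa [hf_eq] using (hd.scomp x (hasDerivAt_neg x)).neg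

theorem hasDerivAt_of_eqOn_Iic_of_eqOn_Ici {F : Type*} [NormedAddCommGroup F] [NormedSpace ℝ F]
    {f g k : ℝ → F} {f' : F} {a : ℝ} (hg : HasDerivAt g f' a) (hk : HasDerivAt k f' a)
    (hfg : EqOn f g (Iic a)) (hfk : EqOn f k (Ici a)) : HasDerivAt f f' a := by
  have h := (hg.hasDerivWithinAt.congr hfg (hfg self_mem_Iic)).union
    (hk.hasDerivWithinAt.congr hfk (hfk self_mem_Ici))
  rwa [Iic_union_Ici, hasDerivWithinAt_univ] at h

noncomputable def crop (h : ℝ → ℝ) (c t : ℝ) : ℝ :=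
  if 0 ≤ t then h (t + c) - h c else h (t - c) - h (-c)

section Crop

variable {h : ℝ → ℝ} {c t d : ℝ}

theorem crop_of_nonneg (ht : 0 ≤ t) : crop h c t = h (t + c) - h c := if_pos ht

theorem crop_of_nonpos (ht : t ≤ 0) : crop h c t = h (t - c) - h (-c) := by
  rcases ht.lt_or_eq with ht | rfl
  · exact if_neg ht.not_ge
  · simp [crop]

variable (h c) in
theorem crop_zero : crop h c 0 = 0 := by simp [crop]

theorem strictMono_crop (hmono : StrictMono h) : StrictMono (crop h c) := by
  refine StrictMonoOn.Iic_union_Ici (a := 0) ?_ ?_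
  · intro a ha b hb hab
    rw [crop_of_nonpos ha, crop_of_nonpos hb]
    exact sub_lt_sub_right (hmono (sub_lt_sub_right hab c)) _
  · intro a ha b hb hab
    rw [crop_of_nonneg ha, crop_of_nonneg hb]
    exact sub_lt_sub_right (hmono (add_lt_add_left hab c)) _

theorem surjective_crop (hmono : StrictMono h) (hsurj : Function.Surjective h) :
    Function.Surjective (crop h c) := by
  intro y
  rcases le_or_gt 0 y with hy | hy
  · obtain ⟨s, hs⟩ := hsurj (y + h c)
    have hcs : c ≤ s := hmono.le_iff_le.1 (by linarith)
    refine ⟨s - c, ?_⟩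
    rw [crop_of_nonneg (sub_nonneg.2 hcs), sub_add_cancel, hs, add_sub_cancel_right]
  · obtain ⟨s, hs⟩ := hsurj (y + h (-c))
    have hsc : s ≤ -c := hmono.le_iff_le.1 (by linarith)
    refine ⟨s + c, ?_⟩
    rw [crop_of_nonpos (by linarith), add_sub_cancel_right, hs, add_sub_cancel_right]

theorem hasDerivAt_crop_of_pos (hd : HasDerivAt h d (t + c)) (ht : 0 < t) :
    HasDerivAt (crop h c) d t :=
  (hd.comp_add_const t c).sub_const (h c) |>.congr_of_eventuallyEq <|
    Filter.eventually_of_mem (Ioi_mem_nhds ht) fun _ hs => crop_of_nonneg (le_of_lt hs)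

theorem hasDerivAt_crop_of_neg (hd : HasDerivAt h d (t - c)) (ht : t < 0) :
    HasDerivAt (crop h c) d t :=
  (hd.comp_sub_const t c).sub_const (h (-c)) |>.congr_of_eventuallyEq <|
    Filter.eventually_of_mem (Iio_mem_nhds ht) fun _ hs => crop_of_nonpos (le_of_lt hs)

theorem hasDerivAt_crop_zero (hdc : HasDerivAt h d c) (hdnc : HasDerivAt h d (-c)) :
    HasDerivAt (crop h c) d 0 := by
  refine hasDerivAt_of_eqOn_Iic_of_eqOn_Ici (g := fun s => h (s - c) - h (-c))
    (k := fun s => h (s + c) - h c) ?_ ?_ (fun _ hs => crop_of_nonpos hs)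
    (fun _ hs => crop_of_nonneg hs)
  · exact (HasDerivAt.comp_sub_const 0 c (by rwa [zero_sub])).sub_const _
  · exact (HasDerivAt.comp_add_const 0 c (by rwa [zero_add])).sub_const _

end Crop

/-- Cropping out degeneracies: if `h` is an odd strictly increasing bijection of `ℝ`,
differentiable with positive derivative `h′(t)` at every `t ≠ 0`, and `c > 0`, then
`H_c(t) = h(t+c) − h(c)` for `t ≥ 0`, `H_c(t) = h(t−c) − h(−c)` for `t ≤ 0` is a strictly
increasing bijection of `ℝ` with `H_c(0) = 0` which is everywhere differentiable with
positive derivative; at `t = 0` the derivative equals `h′(c) = h′(−c)`. -/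
theorem cropping_out_degeneracies
    (h : ℝ → ℝ) (hodd : ∀ t : ℝ, h (-t) = -h t)
    (hmono : StrictMono h) (hbij : Function.Bijective h)
    (h' : ℝ → ℝ)
    (hderiv : ∀ t : ℝ, t ≠ 0 → HasDerivAt h (h' t) t)
    (hpos : ∀ t : ℝ, t ≠ 0 → 0 < h' t)
    (c : ℝ) (hc : 0 < c)
    (H : ℝ → ℝ)
    (hHpos : ∀ t : ℝ, 0 ≤ t → H t = h (t + c) - h c)
    (hHneg : ∀ t : ℝ, t ≤ 0 → H t = h (t - c) - h (-c)) :
    StrictMono H ∧ Function.Bijective H ∧ H 0 = 0 ∧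
    (∃ H' : ℝ → ℝ, (∀ t : ℝ, HasDerivAt H (H' t) t ∧ 0 < H' t) ∧
      H' 0 = h' c ∧ h' c = h' (-c)) := by
  obtain rfl : H = crop h c := funext fun t => by
    rcases le_total 0 t with ht | ht
    · rw [hHpos t ht, crop_of_nonneg ht]
    · rw [hHneg t ht, crop_of_nonpos ht]
  have hsym : h' c = h' (-c) :=
    (hderiv c hc.ne').unique ((hderiv (-c) (neg_ne_zero.2 hc.ne')).of_neg_of_odd hodd)
  have hSM := strictMono_crop (c := c) hmono
  refine ⟨hSM, ⟨hSM.injective, surjective_crop hmono hbij.2⟩, crop_zero h c,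
    fun t => if 0 ≤ t then h' (t + c) else h' (t - c), fun t => ⟨?_, ?_⟩, by simp, hsym⟩
  · dsimp only
    rcases lt_trichotomy t 0 with ht | rfl | ht
    · rw [if_neg ht.not_ge]
      exact hasDerivAt_crop_of_neg (hderiv _ (by linarith)) ht
    · rw [if_pos le_rfl, zero_add]
      exact hasDerivAt_crop_zero (hderiv c hc.ne') (hsym ▸ hderiv (-c) (by linarith))
    · rw [if_pos ht.le]
      exact hasDerivAt_crop_of_pos (hderiv _ (by linarith)) ht
  · dsimp only
    split_ifs <;> exact hpos _ (by linarith)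
end

section
/- Let h, k : ℝ → ℝ. The functional identity (h(−Y), k(X)) = (−k(Y), h(X)) for all X, Y ∈ ℝ holds if and only if h = k and h is odd. Equivalently: the Lorentz-conformal map α(X,Y) = (h(X), k(Y)) satisfies α ∘ ρ = ρ′ ∘ α, where ρ(X,Y) = (−Y, X) and ρ′(U,V) = (−V, U) are the rotations by π/2 in the source and target planes, exactly when h = k with h odd; such maps are the unfoldings, with full symmetry the identity isomorphism D₄ → D₄. -/
/-- The map `α(X,Y) = (h(X), k(Y))` commutes with the rotations by `π/2`,
`ρ(X,Y) = (−Y, X)` in the source and `ρ′(U,V) = (−V, U)` in the target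
(i.e. `α ∘ ρ = ρ′ ∘ α`), exactly when `h = k` and `h` is odd. -/
theorem rotation_rotation_symmetry_iff_odd
    (h k : ℝ → ℝ) :
    (((fun q : ℝ × ℝ => (h q.1, k q.2)) ∘ (fun q : ℝ × ℝ => (-q.2, q.1))
        = (fun q : ℝ × ℝ => (-q.2, q.1)) ∘ (fun q : ℝ × ℝ => (h q.1, k q.2))) ↔
      (h = k ∧ ∀ t : ℝ, h (-t) = -h t)) ∧
    ((∀ X Y : ℝ, (h (-Y), k X) = (-k Y, h X)) ↔
      (h = k ∧ ∀ t : ℝ, h (-t) = -h t)) := by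
  have key : (∀ X Y : ℝ, (h (-Y), k X) = (-k Y, h X)) ↔
      (h = k ∧ ∀ t : ℝ, h (-t) = -h t) := by
    constructor
    · intro H
      have h1 : ∀ X Y : ℝ, h (-Y) = -k Y ∧ k X = h X := by
        intro X Y
        have := H X Y
        exact ⟨congrArg Prod.fst this, congrArg Prod.snd this⟩
      have hk : h = k := funext fun X => ((h1 X 0).2).symm
      refine ⟨hk, fun t => ?_⟩
      rw [(h1 0 t).1, hk]
    · rintro ⟨rfl, hodd⟩
      intro X Y
      simp [hodd]
  refine ⟨?_, key⟩
  rw [← key]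
  constructor
  · intro H X Y
    have := congrFun H (X, Y)
    simpa using this
  · intro H
    funext q
    simpa using H q.1 q.2
end
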